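/- arXiv:2405.05535 — 7 statements merged into one kernel-verified Lean document; each statement's English description precedes it below -/
import Mathlib

section
/- Let m, n, c, α′ and z′_1, …, z′_n be positive integers such that c > 2m + 2, c divides α′, and each z′_i is a positive multiple of c. Then the multiset {z′_1, …, z′_n} can be partitioned into at most m multisets each summing to at most α′ if and only if the multiset obtained from {z′_1, …, z′_n} by adding 2m + 2 copies of 1 can be partitioned into at most m multisets each summing to at most α′ + 2m + 2. -/
/-- `M` can be partitioned into at most `m` multisets each summing to at most `α`. -/
def CanPartition (M : Multiset ℕ) (m α : ℕ) : Prop :=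
  ∃ P : Multiset (Multiset ℕ), Multiset.card P ≤ m ∧ P.sum = M ∧ ∀ S ∈ P, S.sum ≤ α

lemma map_filter_sum (p : ℕ → Prop) [DecidablePred p] (Q : Multiset (Multiset ℕ)) :
    (Q.map (Multiset.filter p)).sum = Q.sum.filter p := by
  induction Q using Multiset.induction with
  | empty => simp
  | cons a s ih => simp [Multiset.filter_add, ih]

lemma mem_of_mem_mem {a : ℕ} {S : Multiset ℕ} {Q : Multiset (Multiset ℕ)}
    (ha : a ∈ S) (hS : S ∈ Q) : a ∈ Q.sum := by
  induction Q using Multiset.induction with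
  | empty => simp at hS
  | cons b s ih =>
    rw [Multiset.mem_cons] at hS
    rw [Multiset.sum_cons, Multiset.mem_add]
    rcases hS with rfl | hS
    · exact Or.inl ha
    · exact Or.inr (ih hS)

theorem stmt2 (m n c α' : ℕ) (hm : 0 < m) (hn : 0 < n) (hα' : 0 < α')
    (hc : 2 * m + 2 < c) (hdvd : c ∣ α')
    (z' : Fin n → ℕ) (hz'pos : ∀ i, 0 < z' i) (hz'dvd : ∀ i, c ∣ z' i) :
    CanPartition (Finset.univ.val.map z') m α' ↔
      CanPartition (Finset.univ.val.map z' + Multiset.replicate (2 * m + 2) 1) m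
        (α' + (2 * m + 2)) := by
  classical
  set M := Finset.univ.val.map z' with hM
  have hMmem : ∀ a ∈ M, c ∣ a ∧ a ≠ 1 := by
    intro a ha
    rw [hM, Multiset.mem_map] at ha
    obtain ⟨i, _, rfl⟩ := ha
    have h1 := hz'dvd i
    have h2 := hz'pos i
    have : c ≤ z' i := Nat.le_of_dvd h2 h1
    exact ⟨h1, by omega⟩
  constructor
  · rintro ⟨P, hcard, hsum, hbound⟩
    have hMne : M ≠ 0 := by
      intro h
      have := congrArg Multiset.card h
      simp [hM] at this
      omega
    have hPne : P ≠ 0 := by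
      intro h; rw [h] at hsum; simp at hsum; exact hMne hsum.symm
    obtain ⟨S, hS⟩ := Multiset.exists_mem_of_ne_zero hPne
    have hPcard : 0 < Multiset.card P := Multiset.card_pos.2 hPne
    refine ⟨(S + Multiset.replicate (2 * m + 2) 1) ::ₘ P.erase S, ?_, ?_, ?_⟩
    · rw [Multiset.card_cons, Multiset.card_erase_of_mem hS, Nat.pred_eq_sub_one]
      omega
    · rw [Multiset.sum_cons]
      have hP : S ::ₘ P.erase S = P := Multiset.cons_erase hS
      have : S + (P.erase S).sum = P.sum := by rw [← hP, Multiset.sum_cons]; rw [hP]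
      rw [add_assoc, add_comm (Multiset.replicate (2 * m + 2) 1) _, ← add_assoc, this,
        hsum]
    · intro T hT
      rw [Multiset.mem_cons] at hT
      rcases hT with rfl | hT
      · rw [Multiset.sum_add, Multiset.sum_replicate, smul_eq_mul, mul_one]
        have := hbound S hS
        omega
      · have := hbound T (Multiset.mem_of_mem_erase hT)
        omega
  · rintro ⟨Q, hcard, hsum, hbound⟩
    refine ⟨Q.map (Multiset.filter (· ≠ 1)), ?_, ?_, ?_⟩
    · simpa using hcard
    · rw [map_filter_sum, hsum, Multiset.filter_add]
      have h1 : M.filter (· ≠ 1) = M :=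
        Multiset.filter_eq_self.2 fun a ha => (hMmem a ha).2
      have h2 : (Multiset.replicate (2 * m + 2) 1).filter (· ≠ 1) = 0 := by
        rw [Multiset.filter_eq_nil]
        intro a ha
        rw [Multiset.eq_of_mem_replicate ha]
        simp
      rw [h1, h2, add_zero]
    · intro T hT
      rw [Multiset.mem_map] at hT
      obtain ⟨S, hSQ, rfl⟩ := hT
      have hdvdT : c ∣ (S.filter (· ≠ 1)).sum := by
        apply Multiset.dvd_sum
        intro a ha
        rw [Multiset.mem_filter] at ha
        have hmem : a ∈ Q.sum := mem_of_mem_mem ha.1 hSQ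
        rw [hsum, Multiset.mem_add] at hmem
        rcases hmem with h | h
        · exact (hMmem a h).1
        · exact absurd (Multiset.eq_of_mem_replicate h) ha.2
      have hle : (S.filter (· ≠ 1)).sum ≤ S.sum := by
        obtain ⟨u, hu⟩ := Multiset.le_iff_exists_add.1 (Multiset.filter_le (· ≠ 1) S)
        conv_rhs => rw [hu]
        rw [Multiset.sum_add]; exact Nat.le_add_right _ _
      have hS := hbound S hSQ
      obtain ⟨k, hk⟩ := hdvdT
      obtain ⟨l, hl⟩ := hdvd
      have hkl : k ≤ l := by
        by_contra h
        push_neg at h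
        have : c * (l + 1) ≤ c * k := Nat.mul_le_mul_left c h
        rw [Nat.mul_add, mul_one] at this
        omega
      calc (S.filter (· ≠ 1)).sum = c * k := hk
        _ ≤ c * l := Nat.mul_le_mul_left c hkl
        _ = α' := hl.symm
end

section
/- Let κ, α and N be positive integers with α ≥ 2. Let C_S and C_T be legal configurations for capacity κ with |C_S| = |C_T| = N, with the same underlying multiset of items U(C_S) = U(C_T), such that α·x ≤ κ for every item x of U(C_S), and such that the average slack of C_S, namely (1/N)·Σ_{B ∈ C_S} slack(B), is at least κ/(α+1) + 3ακ/((α+1)N). Then C_S is reconfigurable to C_T for capacity κ. -/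
/-- A bunch is a multiset of items (item = positive integer, encoded as `ℕ`). -/
abbrev Bunch := Multiset ℕ

/-- A configuration is a multiset of bunches. -/
abbrev Config := Multiset Bunch

/-- The volume of a bunch is the sum of its items. -/
def vol (B : Bunch) : ℕ := B.sum

/-- A configuration is legal for capacity `κ` if every bunch has volume at most `κ`. -/
def Legal (κ : ℕ) (C : Config) : Prop := ∀ B ∈ C, vol B ≤ κ

/-- The total slack of a configuration for capacity `κ`. -/
def slackSum (κ : ℕ) (C : Config) : ℕ := (C.map fun B => κ - vol B).sum

/-- `C'` is obtained from `C` by moving the single item `u` from a donor bunch `Bd`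
to a (different occurrence of a) recipient bunch `Br`, respecting the capacity `κ`. -/
def AdjacentVia (κ u : ℕ) (C C' : Config) : Prop :=
  ∃ (rest : Config) (Bd Br : Bunch),
    u ∈ Bd ∧ vol Br + u ≤ κ ∧
    C = Bd ::ₘ Br ::ₘ rest ∧ C' = Bd.erase u ::ₘ (u ::ₘ Br) ::ₘ rest

/-- Two configurations are adjacent if one is obtained from the other by moving a single item. -/
def Adjacent (κ : ℕ) (C C' : Config) : Prop := ∃ u, AdjacentVia κ u C C'

/-- One step of a reconfiguration sequence: both configurations are legal and adjacent. -/
def Step (κ : ℕ) (C C' : Config) : Prop := Legal κ C ∧ Legal κ C' ∧ Adjacent κ C C'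

/-- `CS` is reconfigurable to `CT` for capacity `κ`: there is a sequence of legal
configurations for capacity `κ` from `CS` to `CT` with consecutive ones adjacent. -/
def Reconfigurable (κ : ℕ) (CS CT : Config) : Prop :=
  Relation.ReflTransGen (Step κ) CS CT

/-!
Write `V` for the total volume; the slack hypothesis says `(α + 1) V + 3 α κ ≤ α κ N`. Induct on `N`.
If `(α + 1) V < α κ`, all items fit into one bunch, and both configurations can be collected into it.
Otherwise some sub-multiset `F` of the items has `α κ ≤ (α + 1) vol F` and `vol F ≤ κ` (drop smallest
items as long as the rest stays that heavy). Each configuration can be turned into one containing the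
bunch `F`, by first emptying a bunch and then gathering `F` into it; the remaining `N - 1` bunches still
satisfy the budget, so the induction hypothesis connects them.

A bunch can be emptied because a reachable configuration maximising `∑ vol B ^ 2` has an empty bunch:
otherwise at most two of its bunches are light (`(α + 1) vol B < α κ`), since among three light bunches
some item could be moved to a fuller one, and the budget leaves room for only two light bunches.
-/

open Multiset

lemma vol_cons (x : ℕ) (B : Bunch) : vol (x ::ₘ B) = x + vol B := sum_cons x B

lemma vol_add (A B : Bunch) : vol (A + B) = vol A + vol B := sum_add A B

lemma vol_erase_add {A : Bunch} {z : ℕ} (hz : z ∈ A) : vol (A.erase z) + z = vol A := by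
  rw [add_comm, ← vol_cons, cons_erase hz]

lemma vol_le_of_le {A B : Bunch} (h : A ≤ B) : vol A ≤ vol B := by
  obtain ⟨D, rfl⟩ := Multiset.le_iff_exists_add.mp h
  simp [vol_add]

lemma sum_map_vol (C : Config) : (C.map vol).sum = C.sum.sum := sum_join.symm

lemma mem_sum_of_mem {C : Config} {B : Bunch} {x : ℕ} (hB : B ∈ C) (hx : x ∈ B) : x ∈ C.sum :=
  mem_of_le (le_sum_of_mem hB) hx

lemma legal_cons {κ : ℕ} {B : Bunch} {C : Config} : Legal κ (B ::ₘ C) ↔ vol B ≤ κ ∧ Legal κ C := by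
  simp [Legal]

section Moves

variable {κ : ℕ}

lemma step_move {A R : Bunch} {rest : Config} {z : ℕ} (hleg : Legal κ (A ::ₘ R ::ₘ rest))
    (hz : z ∈ A) (hfit : vol R + z ≤ κ) :
    Step κ (A ::ₘ R ::ₘ rest) (A.erase z ::ₘ (z ::ₘ R) ::ₘ rest) := by
  refine ⟨hleg, ?_, z, rest, A, R, hz, hfit, rfl, rfl⟩
  simp only [legal_cons] at hleg ⊢
  exact ⟨(vol_le_of_le (erase_le z A)).trans hleg.1, by rwa [vol_cons, add_comm], hleg.2.2⟩

namespace Step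

variable {C C' : Config}

lemma symm (h : Step κ C C') : Step κ C' C := by
  obtain ⟨hleg, hleg', u, rest, Bd, Br, hu, -, rfl, rfl⟩ := h
  refine ⟨hleg', hleg, u, rest, u ::ₘ Br, Bd.erase u, mem_cons_self u Br, ?_, cons_swap _ _ _, ?_⟩
  · rw [vol_erase_add hu]
    exact (legal_cons.mp hleg).1
  · rw [erase_cons_head, cons_erase hu, cons_swap]

lemma sum_eq (h : Step κ C C') : C'.sum = C.sum := by
  obtain ⟨-, -, u, rest, Bd, Br, hu, -, rfl, rfl⟩ := h
  simp only [sum_cons, ← add_assoc, cons_add, add_cons]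
  rw [← cons_add, ← cons_add, cons_erase hu]

lemma card_eq (h : Step κ C C') : card C' = card C := by
  obtain ⟨-, -, u, rest, Bd, Br, -, -, rfl, rfl⟩ := h
  simp

lemma cons {F : Bunch} (hF : vol F ≤ κ) (h : Step κ C C') : Step κ (F ::ₘ C) (F ::ₘ C') := by
  obtain ⟨hleg, hleg', u, rest, Bd, Br, hu, hfit, rfl, rfl⟩ := h
  refine ⟨legal_cons.mpr ⟨hF, hleg⟩, legal_cons.mpr ⟨hF, hleg'⟩, u, F ::ₘ rest, Bd, Br, hu, hfit,
    ?_, ?_⟩ <;> simp only [cons_swap F]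

end Step

namespace Reconfigurable

variable {C C' C'' : Config}

lemma trans (h : Reconfigurable κ C C') (h' : Reconfigurable κ C' C'') :
    Reconfigurable κ C C'' :=
  Relation.ReflTransGen.trans h h'

lemma symm (h : Reconfigurable κ C C') : Reconfigurable κ C' C := by
  induction h with
  | refl => exact Relation.ReflTransGen.refl
  | tail _ hs ih => exact Relation.ReflTransGen.head hs.symm ih

lemma sum_eq (h : Reconfigurable κ C C') : C'.sum = C.sum := by
  induction h with
  | refl => rfl
  | tail _ hs ih => exact hs.sum_eq.trans ih

lemma card_eq (h : Reconfigurable κ C C') : card C' = card C := by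
  induction h with
  | refl => rfl
  | tail _ hs ih => exact hs.card_eq.trans ih

lemma legal (h : Reconfigurable κ C C') (hC : Legal κ C) : Legal κ C' := by
  induction h with
  | refl => exact hC
  | tail _ hs _ => exact hs.2.1

lemma cons {F : Bunch} (hF : vol F ≤ κ) (h : Reconfigurable κ C C') :
    Reconfigurable κ (F ::ₘ C) (F ::ₘ C') := by
  induction h with
  | refl => exact Relation.ReflTransGen.refl
  | tail _ hs ih => exact ih.tail (hs.cons hF)

end Reconfigurable

lemma exists_reconfigurable_move_into {T : Bunch} {D : Config} {x : ℕ}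
    (hleg : Legal κ (T ::ₘ D)) (hx : x ∈ D.sum) (hfit : vol T + x ≤ κ) :
    ∃ D', Reconfigurable κ (T ::ₘ D) ((x ::ₘ T) ::ₘ D') := by
  obtain ⟨B, hB, hxB⟩ := mem_join.mp hx
  obtain ⟨D₀, rfl⟩ := exists_cons_of_mem hB
  refine ⟨B.erase x ::ₘ D₀, Relation.ReflTransGen.single ?_⟩
  rw [cons_swap T, cons_swap (x ::ₘ T)]
  exact step_move (by rwa [cons_swap]) hxB hfit

lemma exists_reconfigurable_gather {T : Bunch} {D : Config} {F : Multiset ℕ}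
    (hleg : Legal κ (T ::ₘ D)) (hF : F ≤ D.sum) (hfit : vol T + F.sum ≤ κ) :
    ∃ D', Reconfigurable κ (T ::ₘ D) ((T + F) ::ₘ D') := by
  induction F using Multiset.induction_on with
  | empty => exact ⟨D, by rw [add_zero]; exact Relation.ReflTransGen.refl⟩
  | cons x F ih =>
    rw [sum_cons] at hfit
    obtain ⟨D', hD'⟩ := ih ((le_cons_self F x).trans hF) (by omega)
    obtain ⟨W, hW⟩ := Multiset.le_iff_exists_add.mp hF
    have hx : x ∈ D'.sum := by
      have hsum := hD'.sum_eq
      rw [sum_cons, sum_cons, hW, cons_add, add_cons, ← add_assoc, ← add_cons] at hsum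
      rw [add_left_cancel hsum]
      exact mem_cons_self x W
    obtain ⟨D'', hD''⟩ := exists_reconfigurable_move_into (hD'.legal hleg) hx
      (by rw [vol_add]; exact (by omega : vol T + F.sum + x ≤ κ))
    exact ⟨D'', hD'.trans (by rwa [add_cons])⟩

lemma reconfigurable_collect {C : Config} (hleg : Legal κ C) (hC : C ≠ 0)
    (hV : C.sum.sum ≤ κ) :
    Reconfigurable κ C (C.sum ::ₘ replicate (card C - 1) 0) := by
  obtain ⟨T, D, rfl⟩ : ∃ T D, C = T ::ₘ D := by
    obtain ⟨T, hT⟩ := exists_mem_of_ne_zero hC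
    exact ⟨T, exists_cons_of_mem hT⟩
  obtain ⟨D', hD'⟩ := exists_reconfigurable_gather hleg le_rfl
    (by rwa [sum_cons, sum_add] at hV)
  have hD'0 : D'.sum = 0 := by
    simpa [sum_cons] using hD'.sum_eq
  have hD' : D' = replicate (card D) 0 := by
    rw [← show card D' = card D by simpa using hD'.card_eq]
    exact eq_replicate_card.mpr fun B hB => le_zero.mp (hD'0 ▸ le_sum_of_mem hB)
  simpa [sum_cons, ← hD']

end Moves

def sumSq (C : Config) : ℕ := (C.map fun B => vol B ^ 2).sum

lemma sumSq_le {κ : ℕ} {C : Config} (hleg : Legal κ C) : sumSq C ≤ card C * κ ^ 2 := by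
  simpa [sumSq] using sum_le_card_nsmul (C.map fun B => vol B ^ 2) (κ ^ 2)
    (by simpa using fun B hB => Nat.pow_le_pow_left (hleg B hB) 2)

lemma sumSq_lt_sumSq_move {A R : Bunch} {rest : Config} {z : ℕ} (hz : z ∈ A) (hz0 : 0 < z)
    (hgain : vol A < vol R + z) :
    sumSq (A ::ₘ R ::ₘ rest) < sumSq (A.erase z ::ₘ (z ::ₘ R) ::ₘ rest) := by
  have hA := vol_erase_add hz
  simp only [sumSq, map_cons, sum_cons, vol_cons, ← add_assoc, add_lt_add_iff_right]
  rw [← hA] at hgain ⊢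
  nlinarith

/-- No legal move of a single item strictly increases `sumSq` (see `sumSq_lt_sumSq_move`). -/
def NoImprovingMove (κ : ℕ) (C : Config) : Prop :=
  ∀ A R rest z, C = A ::ₘ R ::ₘ rest → z ∈ A → vol R + z ≤ κ → vol R + z ≤ vol A

lemma NoImprovingMove.not_fits {κ : ℕ} {C : Config} (h : NoImprovingMove κ C) {A R : Bunch}
    {rest : Config} {z : ℕ} (hC : C = A ::ₘ R ::ₘ rest) (hAR : vol A ≤ vol R) (hz : z ∈ A)
    (hz0 : 0 < z) : κ < vol R + z := by
  by_contra! hfit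
  have := h A R rest z hC hz hfit
  omega

def IsLight (α κ : ℕ) (B : Bunch) : Prop := (α + 1) * vol B < α * κ

instance (α κ : ℕ) : DecidablePred (IsLight α κ) := fun _ => inferInstanceAs (Decidable (_ < _))

lemma mul_vol_le {α κ : ℕ} {B : Bunch} (hsmall : ∀ x ∈ B, α * x ≤ κ) :
    α * vol B ≤ card B * κ := by
  have := sum_le_card_nsmul (B.map (α * ·)) κ (by simpa using hsmall)
  rwa [sum_map_mul_left, map_id', card_map, smul_eq_mul] at this

lemma card_lt_of_forall_not_fits {α κ : ℕ} {A R : Bunch} (hR : IsLight α κ R)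
    (hA : IsLight α κ A) (hnot : ∀ z ∈ A, κ < vol R + z) : card A < α := by
  have hbig : ∀ z ∈ A, κ + 1 ≤ (α + 1) * z := by
    intro z hz
    have := Nat.mul_le_mul_left (α + 1) (hnot z hz)
    unfold IsLight at hR
    nlinarith
  have := card_nsmul_le_sum (s := A.map ((α + 1) * ·)) (a := κ + 1) (by simpa using hbig)
  rw [sum_map_mul_left, map_id', card_map, smul_eq_mul] at this
  unfold IsLight vol at hA
  by_contra! h
  nlinarith

lemma exists_cons_forall_le {β : Type*} (f : β → ℕ) {s : Multiset β} (hs : s ≠ 0) :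
    ∃ a t, s = a ::ₘ t ∧ ∀ b ∈ t, f a ≤ f b := by
  obtain ⟨a, ha, hmin⟩ := exists_min_image f hs
  obtain ⟨t, rfl⟩ := exists_cons_of_mem ha
  exact ⟨a, t, rfl, fun b hb => hmin b (mem_cons_of_mem hb)⟩

lemma exists_sorted_three {β : Type*} (f : β → ℕ) {s : Multiset β} (hs : 3 ≤ card s) :
    ∃ a b c t, s = a ::ₘ b ::ₘ c ::ₘ t ∧ f a ≤ f b ∧ f b ≤ f c := by
  obtain ⟨a, s, rfl, ha⟩ := exists_cons_forall_le f (s := s) (by rintro rfl; simp at hs)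
  obtain ⟨b, s, rfl, hb⟩ := exists_cons_forall_le f (s := s) (by rintro rfl; simp at hs)
  obtain ⟨c, t, rfl⟩ : ∃ c t, s = c ::ₘ t := by
    obtain ⟨c, hc⟩ := exists_mem_of_ne_zero (s := s) (by rintro rfl; simp at hs)
    exact ⟨c, exists_cons_of_mem hc⟩
  exact ⟨a, b, c, t, rfl, ha b (mem_cons_self b _), hb c (mem_cons_self c t)⟩

section Stuck

variable {κ α : ℕ} {C : Config}

lemma NoImprovingMove.card_filter_isLight_le_two (hstuck : NoImprovingMove κ C)
    (hα : 0 < α) (hne : (0 : Bunch) ∉ C) (hpos : ∀ x ∈ C.sum, 0 < x)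
    (hsmall : ∀ x ∈ C.sum, α * x ≤ κ) :
    card (C.filter (IsLight α κ)) ≤ 2 := by
  by_contra! h3
  obtain ⟨L₃, L₂, L₁, t, hL, h32, h21⟩ := exists_sorted_three vol h3
  have hlight : ∀ B ∈ C.filter (IsLight α κ), IsLight α κ B := fun B hB => (mem_filter.mp hB).2
  obtain ⟨rest, hC⟩ : ∃ rest, C = L₃ ::ₘ L₂ ::ₘ L₁ ::ₘ rest := by
    refine ⟨t + C.filter (¬ IsLight α κ ·), ?_⟩
    conv_lhs => rw [← filter_add_not (IsLight α κ) C, hL]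
    simp
  -- no item of `L₂` fits into `L₁`, so `L₂` has fewer than `α` items and is at most `(α-1)/α` full
  have hcard : card L₂ < α := by
    refine card_lt_of_forall_not_fits (hlight L₁ (by simp [hL])) (hlight L₂ (by simp [hL]))
      fun z hz => hstuck.not_fits (rest := L₃ ::ₘ rest) ?_ h21 hz (hpos z (mem_sum_of_mem (by simp [hC]) hz))
    rw [hC, cons_swap L₃, cons_swap L₃]
  have hL₂ : α * vol L₂ + κ ≤ α * κ := by
    have := mul_vol_le fun x hx => hsmall x (mem_sum_of_mem (B := L₂) (by simp [hC]) hx)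
    nlinarith
  -- hence any item of `L₃` would fit into `L₂`
  obtain ⟨z, hz⟩ := exists_mem_of_ne_zero (s := L₃) fun h => hne (by rw [hC, ← h]; simp)
  have hfit := hstuck.not_fits (rest := L₁ ::ₘ rest) hC h32 hz (hpos z (mem_sum_of_mem (by simp [hC]) hz))
  have := hsmall z (mem_sum_of_mem (by simp [hC]) hz)
  nlinarith

lemma mul_card_filter_not_isLight_le (C : Config) :
    α * κ * card (C.filter (¬ IsLight α κ ·)) ≤ (α + 1) * C.sum.sum := by
  calc α * κ * card (C.filter (¬ IsLight α κ ·))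
      ≤ ((C.filter (¬ IsLight α κ ·)).map fun B => (α + 1) * vol B).sum := by
        rw [mul_comm, ← smul_eq_mul, ← card_map (fun B => (α + 1) * vol B)]
        refine card_nsmul_le_sum ?_
        simp only [mem_map, mem_filter, IsLight, not_lt]
        rintro _ ⟨B, ⟨-, hB⟩, rfl⟩
        exact hB
    _ ≤ ((C.filter (IsLight α κ)).map fun B => (α + 1) * vol B).sum
          + ((C.filter (¬ IsLight α κ ·)).map fun B => (α + 1) * vol B).sum := le_add_self
    _ = (α + 1) * C.sum.sum := by
        rw [← sum_add, ← map_add, filter_add_not, sum_map_mul_left, sum_map_vol]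

lemma exists_improving_move (hκ : 0 < κ) (hα : 0 < α) (hne : (0 : Bunch) ∉ C)
    (hpos : ∀ x ∈ C.sum, 0 < x) (hsmall : ∀ x ∈ C.sum, α * x ≤ κ)
    (hbudget : (α + 1) * C.sum.sum + 3 * (α * κ) ≤ α * κ * card C) :
    ¬ NoImprovingMove κ C := by
  intro hstuck
  have hlight := hstuck.card_filter_isLight_le_two hα hne hpos hsmall
  have hheavy := mul_card_filter_not_isLight_le (α := α) (κ := κ) C
  have hcard := congrArg card (filter_add_not (IsLight α κ) C)
  rw [card_add] at hcard
  have : 0 < α * κ := Nat.mul_pos hα hκ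
  nlinarith

end Stuck

section Main

variable {κ α : ℕ}

lemma exists_reconfigurable_zero_mem (hκ : 0 < κ) (hα : 0 < α) {C : Config}
    (hleg : Legal κ C) (hpos : ∀ x ∈ C.sum, 0 < x) (hsmall : ∀ x ∈ C.sum, α * x ≤ κ)
    (hbudget : (α + 1) * C.sum.sum + 3 * (α * κ) ≤ α * κ * card C) :
    ∃ C', Reconfigurable κ C C' ∧ (0 : Bunch) ∈ C' := by
  -- a reachable configuration maximising `sumSq` must contain an empty bunch
  set S := {n | ∃ C', Reconfigurable κ C C' ∧ sumSq C' = n}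
  have hbdd : BddAbove S := by
    refine ⟨card C * κ ^ 2, ?_⟩
    rintro _ ⟨C', hC', rfl⟩
    simpa [hC'.card_eq] using sumSq_le (hC'.legal hleg)
  obtain ⟨C', hC', hmax⟩ := Nat.sSup_mem (s := S) ⟨_, C, Relation.ReflTransGen.refl, rfl⟩ hbdd
  by_contra! hne
  have hsum := hC'.sum_eq
  have hmove := exists_improving_move hκ hα (hne C' hC') (hsum ▸ hpos) (hsum ▸ hsmall)
    (by rwa [hsum, hC'.card_eq])
  simp only [NoImprovingMove, not_forall, not_le] at hmove
  obtain ⟨A, R, rest, z, rfl, hz, hfit, hgain⟩ := hmove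
  have hstep := step_move (hC'.legal hleg) hz hfit
  have hlt := sumSq_lt_sumSq_move (rest := rest) hz (hpos z (hsum ▸ mem_sum_of_mem
    (mem_cons_self A _) hz)) (by omega)
  exact (le_csSup hbdd ⟨_, hC'.tail hstep, rfl⟩).not_gt (hmax ▸ hlt)

lemma exists_reconfigurable_cons (hκ : 0 < κ) (hα : 0 < α) {C : Config} {F : Multiset ℕ}
    (hleg : Legal κ C) (hpos : ∀ x ∈ C.sum, 0 < x) (hsmall : ∀ x ∈ C.sum, α * x ≤ κ)
    (hbudget : (α + 1) * C.sum.sum + 3 * (α * κ) ≤ α * κ * card C)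
    (hF : F ≤ C.sum) (hFκ : F.sum ≤ κ) :
    ∃ D, Reconfigurable κ C (F ::ₘ D) ∧ Legal κ D ∧ card D = card C - 1 ∧ D.sum = C.sum - F := by
  obtain ⟨C', hC', hzero⟩ := exists_reconfigurable_zero_mem hκ hα hleg hpos hsmall hbudget
  obtain ⟨D, rfl⟩ := exists_cons_of_mem hzero
  have hD : D.sum = C.sum := by simpa using hC'.sum_eq
  obtain ⟨D', hD'⟩ := exists_reconfigurable_gather (hC'.legal hleg) (hD ▸ hF)
    (by simpa [vol] using hFκ)
  have hCD' : Reconfigurable κ C (F ::ₘ D') := hC'.trans (by simpa using hD')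
  refine ⟨D', hCD', (legal_cons.mp (hCD'.legal hleg)).2, ?_, ?_⟩
  · simp [← hCD'.card_eq]
  · rw [← hCD'.sum_eq, sum_cons, add_tsub_cancel_left]

lemma budget_sub {N : ℕ} {I F : Multiset ℕ} (hbudget : (α + 1) * I.sum + 3 * (α * κ) ≤ α * κ * N)
    (hFI : F ≤ I) (hF : α * κ ≤ (α + 1) * F.sum) :
    (α + 1) * (I - F).sum + 3 * (α * κ) ≤ α * κ * (N - 1) := by
  have hI : (I - F).sum + F.sum = I.sum := by rw [← sum_add, tsub_add_cancel_of_le hFI]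
  rcases N with _ | N
  · rw [zero_tsub]
    nlinarith
  · rw [Nat.add_sub_cancel, mul_add_one] at *
    nlinarith

lemma vol_le_of_isLight_erase_min (hα : 0 < α) {I : Bunch} (hsmall : ∀ x ∈ I, α * x ≤ κ)
    {w : ℕ} (hw : w ∈ I) (hmin : ∀ x ∈ I, w ≤ x) (hlight : IsLight α κ (I.erase w)) :
    vol I ≤ κ := by
  have hI := vol_erase_add hw
  unfold IsLight at hlight
  by_cases hw_small : (α + 1) * w ≤ κ
  · nlinarith
  -- all items exceed `κ / (α + 1)`, so fewer than `α` of them fit below `α κ / (α + 1)`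
  have hcard : card (I.erase w) < α := by
    have := card_nsmul_le_sum (s := I.erase w) (a := w) fun x hx => hmin x (mem_of_mem_erase hx)
    rw [smul_eq_mul] at this
    by_contra! h
    unfold vol at hlight
    nlinarith
  have := mul_vol_le hsmall
  rw [← card_erase_add_one hw] at this
  nlinarith

lemma exists_le_not_isLight_vol_le (hκ : 0 < κ) (hα : 0 < α) (I : Bunch)
    (hsmall : ∀ x ∈ I, α * x ≤ κ) (hI : ¬ IsLight α κ I) :
    ∃ F ≤ I, ¬ IsLight α κ F ∧ vol F ≤ κ := by
  induction I using Multiset.strongInductionOn with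
  | ih I ih =>
  obtain ⟨w, hw, hmin⟩ := exists_min_image id (s := I) (by
    rintro rfl
    exact hI (by simp [IsLight, vol, Nat.mul_pos hα hκ]))
  by_cases h : IsLight α κ (I.erase w)
  · exact ⟨I, le_rfl, hI, vol_le_of_isLight_erase_min hα hsmall hw hmin h⟩
  · obtain ⟨F, hFI, hF⟩ := ih _ (erase_lt.mpr hw) (fun x hx => hsmall x (mem_of_mem_erase hx)) h
    exact ⟨F, hFI.trans (erase_le w I), hF⟩

theorem reconfigurable_of_budget (hκ : 0 < κ) (hα : 0 < α) (N : ℕ) {I : Multiset ℕ}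
    (hpos : ∀ x ∈ I, 0 < x) (hsmall : ∀ x ∈ I, α * x ≤ κ)
    (hbudget : (α + 1) * I.sum + 3 * (α * κ) ≤ α * κ * N) {C C' : Config}
    (hC : Legal κ C) (hC' : Legal κ C') (hcard : card C = N) (hcard' : card C' = N)
    (hsum : C.sum = I) (hsum' : C'.sum = I) :
    Reconfigurable κ C C' := by
  induction N using Nat.strong_induction_on generalizing I C C' with
  | _ N ih =>
  have hN : 0 < N := Nat.pos_of_ne_zero fun h => by
    subst h
    rw [mul_zero] at hbudget
    exact (le_of_add_le_right hbudget).not_gt (by positivity)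
  by_cases hlight : IsLight α κ I
  · have hIκ : I.sum ≤ κ := by
      unfold IsLight vol at hlight
      nlinarith
    have hcollect : ∀ {C}, Legal κ C → card C = N → C.sum = I →
        Reconfigurable κ C (I ::ₘ replicate (N - 1) 0) := fun hleg hcard hsum => by
      subst hsum hcard
      exact reconfigurable_collect hleg (by rintro rfl; simp at hN) hIκ
    exact (hcollect hC hcard hsum).trans (hcollect hC' hcard' hsum').symm
  · obtain ⟨F, hFI, hF, hFκ⟩ := exists_le_not_isLight_vol_le hκ hα I hsmall hlight
    have hcons : ∀ {C}, Legal κ C → card C = N → C.sum = I → ∃ D, Reconfigurable κ C (F ::ₘ D) ∧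
        Legal κ D ∧ card D = N - 1 ∧ D.sum = I - F := fun hleg hcard hsum => by
      subst hsum hcard
      exact exists_reconfigurable_cons hκ hα hleg hpos hsmall hbudget hFI hFκ
    obtain ⟨D, hCD, hD, hDcard, hDsum⟩ := hcons hC hcard hsum
    obtain ⟨D', hCD', hD', hD'card, hD'sum⟩ := hcons hC' hcard' hsum'
    have hsub : ∀ x ∈ I - F, x ∈ I := fun x => mem_of_le tsub_le_self
    have hDD' : Reconfigurable κ D D' := ih (N - 1) (by omega) (fun x hx => hpos x (hsub x hx))
      (fun x hx => hsmall x (hsub x hx)) (budget_sub hbudget hFI (not_lt.mp hF)) hD hD' hDcard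
      hD'card hDsum hD'sum
    exact hCD.trans ((hDD'.cons hFκ).trans hCD'.symm)

lemma slackSum_add_sum_sum {κ : ℕ} {C : Config} (hleg : Legal κ C) :
    slackSum κ C + C.sum.sum = card C * κ := by
  rw [slackSum, ← sum_map_vol, ← sum_map_add, map_congr rfl fun B hB => tsub_add_cancel_of_le
    (hleg B hB)]
  simp

lemma budget_of_slack {N : ℕ} {C : Config} (hN : 0 < N) (hleg : Legal κ C) (hcard : card C = N)
    (hslack : (κ : ℚ) / (α + 1) + 3 * α * κ / ((α + 1) * N) ≤ (slackSum κ C : ℚ) / N) :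
    (α + 1) * C.sum.sum + 3 * (α * κ) ≤ α * κ * N := by
  have hslackQ : ((slackSum κ C : ℕ) : ℚ) + (C.sum.sum : ℕ) = N * κ := by
    rw [← hcard]; exact_mod_cast slackSum_add_sum_sum hleg
  have hNQ : (0 : ℚ) < N := by exact_mod_cast hN
  rw [div_add_div _ _ (by positivity) (by positivity), div_le_div_iff₀ (by positivity) hNQ]
    at hslack
  have hscaled : ((α + 1) * N : ℚ) * (N * κ + 3 * α * κ)
      ≤ ((α + 1) * N : ℚ) * ((α + 1) * slackSum κ C) := by linarith
  have h := le_of_mul_le_mul_left hscaled (by positivity)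
  have := congrArg ((α + 1 : ℚ) * ·) hslackQ
  suffices ((α + 1) * C.sum.sum + 3 * (α * κ) : ℚ) ≤ α * κ * N by exact_mod_cast this
  linarith

end Main

theorem stmt4 (κ α N : ℕ) (hκ : 0 < κ) (hα : 2 ≤ α) (hN : 0 < N)
    (CS CT : Config) (hS : Legal κ CS) (hT : Legal κ CT)
    (hcardS : Multiset.card CS = N) (hcardT : Multiset.card CT = N)
    (hU : CS.sum = CT.sum)
    (hpos : ∀ x ∈ CS.sum, 0 < x)
    (hsmall : ∀ x ∈ CS.sum, α * x ≤ κ)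
    (hslack : (κ : ℚ) / (α + 1) + 3 * α * κ / ((α + 1) * N) ≤ (slackSum κ CS : ℚ) / N) :
    Reconfigurable κ CS CT := by
  exact reconfigurable_of_budget hκ (by omega) N hpos hsmall (budget_of_slack hN hS hcardS hslack)
    hS hT hcardS hcardT rfl hU.symm
end

section
/- Let κ and α be positive integers with α ≥ 2, and let C be a legal configuration for capacity κ with |C| ≥ 1 such that α·x ≤ κ for every item x of U(C) and the average slack of C, namely (1/|C|)·Σ_{B ∈ C} slack(B), is at least κ/(α+1) + 3ακ/((α+1)|C|). Then C is reconfigurable for capacity κ to some legal configuration C′ that contains at least one empty bunch. -/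
namespace Stmt5Aux

/-- Sum of squared volumes: the potential function. -/
def SS (C : Config) : ℕ := (C.map fun B => vol B * vol B).sum

lemma slack_cons (κ : ℕ) (B : Bunch) (t : Config) :
    slackSum κ (B ::ₘ t) = (κ - vol B) + slackSum κ t := by simp [slackSum]

lemma SS_cons (B : Bunch) (t : Config) : SS (B ::ₘ t) = vol B * vol B + SS t := by simp [SS]

lemma exists_min_vol (C : Config) (h : C ≠ 0) : ∃ B ∈ C, ∀ B' ∈ C, vol B ≤ vol B' := by
  obtain ⟨B, hB, hmin⟩ := C.toFinset.exists_min_image vol (by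
    simp [Finset.nonempty_iff_ne_empty, Multiset.toFinset_eq_empty, h])
  exact ⟨B, Multiset.mem_toFinset.1 hB, fun B' hB' => hmin B' (Multiset.mem_toFinset.2 hB')⟩

lemma exists_min_item (B : Bunch) (h : B ≠ 0) : ∃ u ∈ B, ∀ v ∈ B, u ≤ v := by
  obtain ⟨u, hu, hmin⟩ := B.toFinset.exists_min_image id (by
    simp [Finset.nonempty_iff_ne_empty, Multiset.toFinset_eq_empty, h])
  exact ⟨u, Multiset.mem_toFinset.1 hu, fun v hv => hmin v (Multiset.mem_toFinset.2 hv)⟩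

lemma mem_sum {C : Config} {B : Bunch} {x : ℕ} (hB : B ∈ C) (hx : x ∈ B) : x ∈ C.sum := by
  rw [← Multiset.cons_erase hB, Multiset.sum_cons]
  exact Multiset.mem_add.2 (Or.inl hx)

lemma SS_le (κ : ℕ) (C : Config) (hC : Legal κ C) : SS C ≤ Multiset.card C * (κ * κ) := by
  have h1 : (C.map fun B => vol B * vol B).sum ≤ (C.map fun _ => κ * κ).sum :=
    Multiset.sum_map_le_sum_map _ _ (fun B hB => Nat.mul_le_mul (hC B hB) (hC B hB))
  simpa [SS, Multiset.map_const', Multiset.sum_replicate] using h1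

set_option maxHeartbeats 2000000 in
/-- If no bunch is empty, there is a move (donor to a no-less-full recipient). -/
lemma exists_move (κ α : ℕ) (hκ : 0 < κ) (hα : 2 ≤ α) (C : Config)
    (hC : Legal κ C) (hpos : ∀ x ∈ C.sum, 0 < x) (hsmall : ∀ x ∈ C.sum, α * x ≤ κ)
    (hslackN : Multiset.card C * κ + 3 * α * κ ≤ (α + 1) * slackSum κ C)
    (hne : (0 : Bunch) ∉ C) :
    ∃ (u : ℕ) (Bd Br : Bunch) (rest : Config),
      C = Bd ::ₘ Br ::ₘ rest ∧ u ∈ Bd ∧ vol Br + u ≤ κ ∧ vol Bd ≤ vol Br := by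
  by_contra hmov
  push_neg at hmov
  have hακ : 2 * κ ≤ α * κ := Nat.mul_le_mul_right _ hα
  -- C ≠ 0
  rcases eq_or_ne C 0 with rfl | hC0
  · simp [slackSum] at hslackN
    rcases hslackN with h | h <;> omega
  obtain ⟨B₁, hB₁C, hB₁min⟩ := exists_min_vol C hC0
  have hCeq : B₁ ::ₘ C.erase B₁ = C := Multiset.cons_erase hB₁C
  set C₂ := C.erase B₁ with hC₂def
  have hB₁ne : B₁ ≠ 0 := fun h => hne (h ▸ hB₁C)
  obtain ⟨u₁, hu₁B, -⟩ := exists_min_item B₁ hB₁ne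
  have hu₁pos : 0 < u₁ := hpos _ (mem_sum hB₁C hu₁B)
  have hu₁small : α * u₁ ≤ κ := hsmall _ (mem_sum hB₁C hu₁B)
  have hu₁le : u₁ ≤ vol B₁ := Multiset.single_le_sum (fun y _ => Nat.zero_le y) _ hu₁B
  have hvolB₁ : vol B₁ ≤ κ := hC _ hB₁C
  have hu₁κ : u₁ ≤ κ := le_trans hu₁le hvolB₁
  -- every other bunch is nearly full
  have key1 : ∀ B ∈ C₂, κ < vol B + u₁ := by
    intro B hB
    by_contra hle
    push_neg at hle
    have hdec : C = B₁ ::ₘ B ::ₘ (C₂.erase B) := by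
      rw [Multiset.cons_erase hB, hCeq]
    have hlt := hmov u₁ B₁ B (C₂.erase B) hdec hu₁B hle
    have : vol B₁ ≤ vol B := hB₁min B (by rw [← hCeq]; exact Multiset.mem_cons_of_mem hB)
    omega
  rcases eq_or_ne C₂ 0 with h2 | hC₂0
  · -- single bunch: contradiction
    have hcard : Multiset.card C = 1 := by rw [← hCeq, h2]; simp
    have hss : slackSum κ C = κ - vol B₁ := by rw [← hCeq, h2]; simp [slackSum]
    rw [hcard, hss] at hslackN
    obtain ⟨s₁, hs₁⟩ : ∃ s₁, vol B₁ + s₁ = κ := ⟨κ - vol B₁, by omega⟩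
    have hs₁eq : κ - vol B₁ = s₁ := by omega
    rw [hs₁eq] at hslackN
    have h3 : (α + 1) * (s₁ + 1) ≤ (α + 1) * κ := Nat.mul_le_mul_left _ (by omega)
    nlinarith [hslackN, h3, hακ, hκ]
  -- second smallest bunch
  obtain ⟨B₂, hB₂C₂, hB₂min⟩ := exists_min_vol C₂ hC₂0
  have hC₂eq : B₂ ::ₘ C₂.erase B₂ = C₂ := Multiset.cons_erase hB₂C₂
  set C₃ := C₂.erase B₂ with hC₃def
  have hB₂C : B₂ ∈ C := by rw [← hCeq]; exact Multiset.mem_cons_of_mem hB₂C₂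
  have hB₂ne : B₂ ≠ 0 := fun h => hne (h ▸ hB₂C)
  obtain ⟨u₂, hu₂B, hu₂min⟩ := exists_min_item B₂ hB₂ne
  have hu₂pos : 0 < u₂ := hpos _ (mem_sum hB₂C hu₂B)
  have hvolB₂κ : vol B₂ ≤ κ := hC _ hB₂C
  have hvolB₂ : κ < vol B₂ + u₁ := key1 B₂ hB₂C₂
  -- B₂ has at least α items
  have hsum_small : α * vol B₂ ≤ Multiset.card B₂ * κ := by
    have h1 : (B₂.map fun x => α * x).sum ≤ (B₂.map fun _ => κ).sum :=
      Multiset.sum_map_le_sum_map _ _ (fun x hx => hsmall x (mem_sum hB₂C hx))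
    have h2 : (B₂.map fun x => α * x).sum = α * vol B₂ := by
      have := Multiset.sum_map_mul_left (s := B₂) (a := α) (f := fun x => x)
      simpa [vol] using this
    have h3 : (B₂.map fun _ => κ).sum = Multiset.card B₂ * κ := by
      simp [Multiset.map_const', Multiset.sum_replicate]
    rw [h2, h3] at h1
    exact h1
  have hcardB₂ : α ≤ Multiset.card B₂ := by
    by_contra hlt
    push_neg at hlt
    have h5 : (Multiset.card B₂ + 1) * κ ≤ α * κ := Nat.mul_le_mul_right _ (by omega)
    have h6 : α * (κ + 1) ≤ α * (vol B₂ + u₁) := Nat.mul_le_mul_left _ (by omega)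
    nlinarith [h5, h6, hu₁small, hsum_small]
  have hαu₂ : α * u₂ ≤ vol B₂ := by
    have h7 : Multiset.card B₂ * u₂ ≤ vol B₂ := by
      simpa [vol] using Multiset.card_nsmul_le_sum hu₂min
    calc α * u₂ ≤ Multiset.card B₂ * u₂ := Nat.mul_le_mul_right _ hcardB₂
      _ ≤ vol B₂ := h7
  -- pointwise bound on the remaining bunches
  have hpt : ∀ B ∈ C₃, (α + 1) * (κ - vol B) + 1 ≤ κ := by
    intro B hB3
    have hBC₂ : B ∈ C₂ := Multiset.mem_of_mem_erase hB3
    have hBC : B ∈ C := by rw [← hCeq]; exact Multiset.mem_cons_of_mem hBC₂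
    have hvolB : vol B ≤ κ := hC _ hBC
    have hv₂B : vol B₂ ≤ vol B := hB₂min B hBC₂
    have hstep : C = B₁ ::ₘ B₂ ::ₘ B ::ₘ C₃.erase B := by
      rw [Multiset.cons_erase hB3, hC₂eq, hCeq]
    have hdec : C = B₂ ::ₘ B ::ₘ (B₁ ::ₘ C₃.erase B) := by
      rw [hstep, Multiset.cons_swap B₁ B₂, Multiset.cons_swap B₁ B]
    have hBu₂ : κ < vol B + u₂ := by
      by_contra hle
      push_neg at hle
      have := hmov u₂ B₂ B (B₁ ::ₘ C₃.erase B) hdec hu₂B hle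
      omega
    obtain ⟨t, ht⟩ : ∃ t, vol B + t = κ := ⟨κ - vol B, by omega⟩
    have hteq : κ - vol B = t := by omega
    rw [hteq]
    have h8 : α * (t + 1) ≤ α * u₂ := Nat.mul_le_mul_left _ (by omega)
    nlinarith [h8, hαu₂, hv₂B, ht, hα]
  -- sum the pointwise bounds
  have hT : (α + 1) * slackSum κ C₃ + Multiset.card C₃ ≤ Multiset.card C₃ * κ := by
    have h1 : (C₃.map fun B => (α + 1) * (κ - vol B) + 1).sum ≤ (C₃.map fun _ => κ).sum :=
      Multiset.sum_map_le_sum_map _ _ hpt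
    have h2 : (C₃.map fun B => (α + 1) * (κ - vol B) + 1).sum
        = (α + 1) * slackSum κ C₃ + Multiset.card C₃ := by
      rw [Multiset.sum_map_add]
      have ha : (C₃.map fun B => (α + 1) * (κ - vol B)).sum = (α + 1) * slackSum κ C₃ :=
        Multiset.sum_map_mul_left (s := C₃) (a := α + 1) (f := fun B => κ - vol B)
      have hb : (C₃.map fun _ => (1 : ℕ)).sum = Multiset.card C₃ := by
        simp [Multiset.map_const', Multiset.sum_replicate]
      rw [ha, hb]
    have h3 : (C₃.map fun _ => κ).sum = Multiset.card C₃ * κ := by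
      simp [Multiset.map_const', Multiset.sum_replicate]
    rw [h2, h3] at h1
    exact h1
  -- assemble
  have hCall : C = B₁ ::ₘ B₂ ::ₘ C₃ := by rw [← hCeq, ← hC₂eq]
  have hcard : Multiset.card C = Multiset.card C₃ + 2 := by
    rw [hCall]; simp only [Multiset.card_cons]
  have hssC : slackSum κ C = (κ - vol B₁) + ((κ - vol B₂) + slackSum κ C₃) := by
    rw [hCall, slack_cons, slack_cons]
  obtain ⟨s₁, hs₁⟩ : ∃ s₁, vol B₁ + s₁ = κ := ⟨κ - vol B₁, by omega⟩
  obtain ⟨s₂, hs₂⟩ : ∃ s₂, vol B₂ + s₂ = κ := ⟨κ - vol B₂, by omega⟩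
  have hss' : slackSum κ C = s₁ + (s₂ + slackSum κ C₃) := by rw [hssC]; omega
  rw [hss', hcard] at hslackN
  have hsum12 : s₁ + s₂ + 1 ≤ κ := by omega
  have hmul : (α + 1) * (s₁ + s₂ + 1) ≤ (α + 1) * κ := Nat.mul_le_mul_left _ hsum12
  nlinarith [hslackN, hmul, hT, hακ, hκ]

/-- Main recursion: as long as no bunch is empty we can increase `SS`. -/
lemma reach (κ α : ℕ) (hκ : 0 < κ) (hα : 2 ≤ α) :
    ∀ (m : ℕ) (C : Config), Multiset.card C * (κ * κ) - SS C ≤ m → Legal κ C →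
      (∀ x ∈ C.sum, 0 < x) → (∀ x ∈ C.sum, α * x ≤ κ) →
      Multiset.card C * κ + 3 * α * κ ≤ (α + 1) * slackSum κ C →
      ∃ C', Reconfigurable κ C C' ∧ Legal κ C' ∧ (0 : Bunch) ∈ C' := by
  intro m
  induction m with
  | zero =>
    intro C hm hC hpos hsmall hsl
    by_cases hb : (0 : Bunch) ∈ C
    · exact ⟨C, Relation.ReflTransGen.refl, hC, hb⟩
    obtain ⟨u, Bd, Br, rest, hCd, hu, hfit, hvle⟩ :=
      exists_move κ α hκ hα C hC hpos hsmall hsl hb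
    -- contradiction: SS can strictly increase but is already maximal
    exfalso
    set C' : Config := Bd.erase u ::ₘ (u ::ₘ Br) ::ₘ rest with hC'def
    have hupos : 0 < u := hpos u (mem_sum (by rw [hCd]; exact Multiset.mem_cons_self _ _) hu)
    have hve : u + vol (Bd.erase u) = vol Bd := by
      rw [vol, vol, ← Multiset.sum_cons, Multiset.cons_erase hu]
    have hBdκ : vol Bd ≤ κ := hC Bd (by rw [hCd]; exact Multiset.mem_cons_self _ _)
    have hvolcons : vol (u ::ₘ Br) = u + vol Br := by simp [vol]
    have hLegal' : Legal κ C' := by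
      intro B hB
      rw [hC'def] at hB
      rcases Multiset.mem_cons.1 hB with rfl | hB
      · omega
      rcases Multiset.mem_cons.1 hB with rfl | hB
      · rw [hvolcons]; omega
      exact hC B (by rw [hCd]; exact Multiset.mem_cons_of_mem (Multiset.mem_cons_of_mem hB))
    have hSSinc : SS C + 1 ≤ SS C' := by
      rw [hCd, hC'def, SS_cons, SS_cons, SS_cons, SS_cons, hvolcons]
      set e := vol (Bd.erase u)
      set r := vol Br
      have h1 : u * (u + e) ≤ u * r := Nat.mul_le_mul_left _ (by omega)
      nlinarith [h1, hupos]
    have hSSle : SS C' ≤ Multiset.card C' * (κ * κ) := SS_le κ C' hLegal'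
    have hcard' : Multiset.card C' = Multiset.card C := by rw [hCd, hC'def]; simp
    rw [hcard'] at hSSle
    omega
  | succ m ih =>
    intro C hm hC hpos hsmall hsl
    by_cases hb : (0 : Bunch) ∈ C
    · exact ⟨C, Relation.ReflTransGen.refl, hC, hb⟩
    obtain ⟨u, Bd, Br, rest, hCd, hu, hfit, hvle⟩ :=
      exists_move κ α hκ hα C hC hpos hsmall hsl hb
    set C' : Config := Bd.erase u ::ₘ (u ::ₘ Br) ::ₘ rest with hC'def
    have hupos : 0 < u := hpos u (mem_sum (by rw [hCd]; exact Multiset.mem_cons_self _ _) hu)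
    have hve : u + vol (Bd.erase u) = vol Bd := by
      rw [vol, vol, ← Multiset.sum_cons, Multiset.cons_erase hu]
    have hBdκ : vol Bd ≤ κ := hC Bd (by rw [hCd]; exact Multiset.mem_cons_self _ _)
    have hvolcons : vol (u ::ₘ Br) = u + vol Br := by simp [vol]
    have hLegal' : Legal κ C' := by
      intro B hB
      rw [hC'def] at hB
      rcases Multiset.mem_cons.1 hB with rfl | hB
      · omega
      rcases Multiset.mem_cons.1 hB with rfl | hB
      · rw [hvolcons]; omega
      exact hC B (by rw [hCd]; exact Multiset.mem_cons_of_mem (Multiset.mem_cons_of_mem hB))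
    have hsum' : C'.sum = C.sum := by
      rw [hCd, hC'def]
      have h := Multiset.cons_erase hu
      conv_rhs => rw [← h]
      simp only [Multiset.sum_cons]
      simp only [← Multiset.singleton_add]
      abel
    have hcard' : Multiset.card C' = Multiset.card C := by rw [hCd, hC'def]; simp
    have hslack' : slackSum κ C' = slackSum κ C := by
      rw [hCd, hC'def, slack_cons, slack_cons, slack_cons, slack_cons, hvolcons]
      omega
    have hSSinc : SS C + 1 ≤ SS C' := by
      rw [hCd, hC'def, SS_cons, SS_cons, SS_cons, SS_cons, hvolcons]
      set e := vol (Bd.erase u)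
      set r := vol Br
      have h1 : u * (u + e) ≤ u * r := Nat.mul_le_mul_left _ (by omega)
      nlinarith [h1, hupos]
    have hm' : Multiset.card C' * (κ * κ) - SS C' ≤ m := by
      rw [hcard']
      have key : ∀ a b b' mm : ℕ, b + 1 ≤ b' → a - b ≤ mm + 1 → a - b' ≤ mm := by
        intro a b b' mm h1 h2; omega
      exact key _ _ _ _ hSSinc hm
    obtain ⟨C'', hrec, hleg, hmem⟩ := ih C' hm' hLegal'
      (by rw [hsum']; exact hpos) (by rw [hsum']; exact hsmall)
      (by rw [hcard', hslack']; exact hsl)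
    refine ⟨C'', Relation.ReflTransGen.head ?_ hrec, hleg, hmem⟩
    exact ⟨hC, hLegal', u, rest, Bd, Br, hu, hfit, hCd, rfl⟩

end Stmt5Aux

theorem stmt5 (κ α : ℕ) (hκ : 0 < κ) (hα : 2 ≤ α)
    (C : Config) (hC : Legal κ C) (hcard : 1 ≤ Multiset.card C)
    (hpos : ∀ x ∈ C.sum, 0 < x)
    (hsmall : ∀ x ∈ C.sum, α * x ≤ κ)
    (hslack : (κ : ℚ) / (α + 1) + 3 * α * κ / ((α + 1) * Multiset.card C) ≤
      (slackSum κ C : ℚ) / Multiset.card C) :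
    ∃ C' : Config, Reconfigurable κ C C' ∧ Legal κ C' ∧ (0 : Bunch) ∈ C' := by
  have hn0 : (0 : ℚ) < (Multiset.card C : ℚ) := by exact_mod_cast hcard
  have ha0 : (0 : ℚ) < (α : ℚ) + 1 := by positivity
  have key : ((Multiset.card C : ℚ)) * κ + 3 * α * κ ≤ ((α : ℚ) + 1) * (slackSum κ C) := by
    have h := mul_le_mul_of_nonneg_right hslack (le_of_lt (mul_pos ha0 hn0))
    have e1 : ((κ : ℚ) / (α + 1) + 3 * α * κ / ((α + 1) * (Multiset.card C : ℚ)))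
        * (((α : ℚ) + 1) * (Multiset.card C : ℚ))
        = (Multiset.card C : ℚ) * κ + 3 * α * κ := by
      field_simp
    have e2 : ((slackSum κ C : ℚ) / (Multiset.card C : ℚ))
        * (((α : ℚ) + 1) * (Multiset.card C : ℚ)) = ((α : ℚ) + 1) * (slackSum κ C) := by
      field_simp
    rw [e1, e2] at h
    exact h
  have hslackN : Multiset.card C * κ + 3 * α * κ ≤ (α + 1) * slackSum κ C := by
    exact_mod_cast key
  exact Stmt5Aux.reach κ α hκ hα (Multiset.card C * (κ * κ) - Stmt5Aux.SS C) C le_rfl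
    hC hpos hsmall hslackN
end

section
/- Let k be a positive integer, let κ = 2^k, and let p be a non-negative integer with p < k. Let M be a multiset of powers of 2 whose sum is exactly κ and which contains at least one element of size at most 2^p. Then there exist two disjoint sub-multisets M₁ and M₂ of M (that is, M₁ + M₂ is a sub-multiset of M) such that the sum of the elements of M₁ and the sum of the elements of M₂ are both exactly 2^p. -/
/-!
The elements of `M` that do not divide `2^p` are multiples of `2^(p+1)`, and so is `2^k`; hence
the sum of the divisors of `2^p` in `M` is a positive multiple of `2^(p+1)`. A multiset of
divisors of `2^p` with sum at least `2^p` has a sub-multiset summing to exactly `2^p` (either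
`2^p` itself occurs, or all elements divide `2^(p-1)` and two disjoint pieces of sum `2^(p-1)`
exist by induction), and applying this twice gives the two disjoint pieces.
-/

namespace Multiset

lemma sum_tsub_of_le {M N : Multiset ℕ} (h : N ≤ M) : (M - N).sum = M.sum - N.sum := by
  conv_rhs => rw [← tsub_add_cancel_of_le h, sum_add, add_tsub_cancel_right]

lemma exists_add_le_sum_eq_sum_eq {M : Multiset ℕ} {c : ℕ}
    (hM : ∀ N ≤ M, c ≤ N.sum → ∃ N' ≤ N, N'.sum = c) (h : 2 * c ≤ M.sum) :
    ∃ N₁ N₂ : Multiset ℕ, N₁ + N₂ ≤ M ∧ N₁.sum = c ∧ N₂.sum = c := by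
  obtain ⟨N₁, hN₁, hsum₁⟩ := hM M le_rfl (by omega)
  obtain ⟨N₂, hN₂, hsum₂⟩ := hM (M - N₁) tsub_le_self (by rw [sum_tsub_of_le hN₁]; omega)
  exact ⟨N₁, N₂, (le_tsub_iff_left hN₁).mp hN₂, hsum₁, hsum₂⟩

lemma exists_le_sum_eq_two_pow_of_forall_dvd (p : ℕ) {M : Multiset ℕ}
    (hdvd : ∀ x ∈ M, x ∣ 2 ^ p) (h : 2 ^ p ≤ M.sum) : ∃ N ≤ M, N.sum = 2 ^ p := by
  induction p generalizing M with
  | zero =>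
    obtain ⟨x, hx⟩ := exists_mem_of_ne_zero (s := M) (by rintro rfl; simp at h)
    have hx1 : x = 1 := Nat.dvd_one.mp (hdvd x hx)
    exact ⟨{x}, singleton_le.mpr hx, by simp [hx1]⟩
  | succ p ih =>
    by_cases hmem : 2 ^ (p + 1) ∈ M
    · exact ⟨{2 ^ (p + 1)}, singleton_le.mpr hmem, sum_singleton _⟩
    have hdvd' : ∀ x ∈ M, x ∣ 2 ^ p := by
      intro x hx
      obtain ⟨j, hj, rfl⟩ := (Nat.dvd_prime_pow Nat.prime_two).mp (hdvd x hx)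
      have : j ≠ p + 1 := by rintro rfl; exact hmem hx
      exact pow_dvd_pow 2 (by omega)
    obtain ⟨N₁, N₂, hle, hsum₁, hsum₂⟩ := exists_add_le_sum_eq_sum_eq
      (fun N hN => ih (fun x hx => hdvd' x (mem_of_le hN hx))) (by rwa [← pow_succ'])
    exact ⟨N₁ + N₂, hle, by rw [sum_add, hsum₁, hsum₂, pow_succ]; ring⟩

lemma two_pow_dvd_sum_filter_dvd (p : ℕ) {M : Multiset ℕ} (hpow : ∀ x ∈ M, ∃ j : ℕ, x = 2 ^ j)
    (h : 2 ^ (p + 1) ∣ M.sum) : 2 ^ (p + 1) ∣ (M.filter (· ∣ 2 ^ p)).sum := by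
  have hrest : 2 ^ (p + 1) ∣ (M.filter (¬ · ∣ 2 ^ p)).sum := by
    refine dvd_sum fun x hx => ?_
    obtain ⟨hxM, hx⟩ := mem_filter.mp hx
    obtain ⟨j, rfl⟩ := hpow x hxM
    rw [Nat.pow_dvd_pow_iff_le_right (by norm_num)] at hx ⊢
    omega
  rw [← filter_add_not (· ∣ 2 ^ p) M, sum_add] at h
  exact (Nat.dvd_add_left hrest).mp h

end Multiset

open Multiset in
theorem stmt7_general (k p : ℕ) (hp : p < k) (M : Multiset ℕ)
    (hpow : ∀ x ∈ M, ∃ j : ℕ, x = 2 ^ j) (hsum : M.sum = 2 ^ k)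
    (hsmall : ∃ x ∈ M, x ≤ 2 ^ p) :
    ∃ M₁ M₂ : Multiset ℕ, M₁ + M₂ ≤ M ∧ M₁.sum = 2 ^ p ∧ M₂.sum = 2 ^ p := by
  set S := M.filter (· ∣ 2 ^ p)
  have hS_dvd : 2 ^ (p + 1) ∣ S.sum :=
    two_pow_dvd_sum_filter_dvd p hpow (hsum ▸ pow_dvd_pow 2 hp)
  have hS_pos : 0 < S.sum := by
    obtain ⟨x, hxM, hx⟩ := hsmall
    obtain ⟨j, rfl⟩ := hpow x hxM
    have hxS : 2 ^ j ∈ S :=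
      mem_filter.mpr ⟨hxM, pow_dvd_pow 2 ((Nat.pow_le_pow_iff_right (by norm_num)).mp hx)⟩
    exact (Nat.two_pow_pos j).trans_le (le_sum_of_mem hxS)
  obtain ⟨M₁, M₂, hle, hsum₁, hsum₂⟩ := exists_add_le_sum_eq_sum_eq
    (fun N hN => exists_le_sum_eq_two_pow_of_forall_dvd p
      fun x hx => (mem_filter.mp (mem_of_le hN hx)).2)
    (by rw [← pow_succ']; exact Nat.le_of_dvd hS_pos hS_dvd)
  exact ⟨M₁, M₂, hle.trans (filter_le _ M), hsum₁, hsum₂⟩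

theorem stmt7 (k p : ℕ) (hk : 0 < k) (hp : p < k) (M : Multiset ℕ)
    (hpow : ∀ x ∈ M, ∃ j : ℕ, x = 2 ^ j) (hsum : M.sum = 2 ^ k)
    (hsmall : ∃ x ∈ M, x ≤ 2 ^ p) :
    ∃ M₁ M₂ : Multiset ℕ, M₁ + M₂ ≤ M ∧ M₁.sum = 2 ^ p ∧ M₂.sum = 2 ^ p :=
  stmt7_general k p hp M hpow hsum hsmall
end

section
/- Let C_S and C_T be legal configurations for capacity κ with |C_S| = |C_T|, and let s be a positive integer. If there exists a sequence of legal configurations for capacity κ from C_S to C_T in which each pair of consecutive configurations is adjacent via moving an item of size strictly less than s, then item size s is settled in C_S with respect to C_T. -/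
/-- The multiset of items of `B` of size at least `s`. -/
def AtLeast (s : ℕ) (B : Bunch) : Bunch := B.filter (s ≤ ·)

instance (s : ℕ) (B : Multiset ℕ) : Decidable (∃ x ∈ B, s ≤ x) :=
  Multiset.decidableExistsMultiset

/-- The multiset of bunches of `D` containing an item of size at least `s`. -/
def BunchesWith (s : ℕ) (D : Config) : Config :=
  D.filter fun B => ∃ x ∈ B, s ≤ x

/-- Item size `s` is settled in `D` with respect to `CT`: there is a bijection `φ`
(a multiplicity-respecting pairing) from the multiset of bunches of `D` containing an
item of size at least `s` to the multiset of such bunches of `CT` with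
`D_{≥s}(B) = (CT)_{≥s}(φ B)` for every `B` in the domain. -/
def Settled (s : ℕ) (D CT : Config) : Prop :=
  Multiset.Rel (fun B B' => AtLeast s B = AtLeast s B') (BunchesWith s D) (BunchesWith s CT)

section
variable (s : ℕ)

lemma atLeast_erase (v : ℕ) (hv : v < s) (B : Bunch) (hvB : v ∈ B) :
    AtLeast s (B.erase v) = AtLeast s B := by
  conv_rhs => rw [← Multiset.cons_erase hvB]
  rw [AtLeast, AtLeast, Multiset.filter_cons_of_neg]
  exact not_le.mpr hv

lemma atLeast_cons (v : ℕ) (hv : v < s) (B : Bunch) :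
    AtLeast s (v ::ₘ B) = AtLeast s B := by
  rw [AtLeast, AtLeast, Multiset.filter_cons_of_neg]
  exact not_le.mpr hv

lemma map_atLeast_eq {κ : ℕ} {C C' : Config} {v : ℕ} (hv : v < s)
    (hadj : AdjacentVia κ v C C') :
    C.map (AtLeast s) = C'.map (AtLeast s) := by
  obtain ⟨rest, Bd, Br, hmem, -, rfl, rfl⟩ := hadj
  simp only [Multiset.map_cons]
  rw [atLeast_erase s v hv Bd hmem, atLeast_cons s v hv]

lemma settled_of_map_eq {D D' : Config}
    (h : D.map (AtLeast s) = D'.map (AtLeast s)) : Settled s D D' := by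
  have hpred : ∀ B : Bunch, (∃ x ∈ B, s ≤ x) ↔ (AtLeast s B ≠ 0) := by
    intro B
    constructor
    · rintro ⟨x, hx, hsx⟩ h0
      have : x ∈ AtLeast s B := Multiset.mem_filter.mpr ⟨hx, hsx⟩
      simp [h0] at this
    · intro h0
      obtain ⟨x, hx⟩ := Multiset.exists_mem_of_ne_zero h0
      exact ⟨x, (Multiset.mem_filter.mp hx).1, (Multiset.mem_filter.mp hx).2⟩
  have key : ∀ D : Config, (BunchesWith s D).map (AtLeast s)
      = (D.map (AtLeast s)).filter (· ≠ 0) := by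
    intro D
    rw [BunchesWith, Multiset.filter_congr (fun B _ => by
      simpa using hpred B)]
    rw [Multiset.filter_map]
    rfl
  rw [Settled]
  exact Multiset.rel_map.mp (by rw [key, key, h]; exact Multiset.rel_eq_refl)

end

theorem stmt11 (κ s : ℕ) (hs : 0 < s) (CS CT : Config)
    (hS : Legal κ CS) (hT : Legal κ CT)
    (hcard : Multiset.card CS = Multiset.card CT)
    (hpos : ∀ x ∈ CS.sum, 0 < x)
    (h : Relation.ReflTransGen
      (fun D D' => Legal κ D ∧ Legal κ D' ∧ ∃ v < s, AdjacentVia κ v D D') CS CT) :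
    Settled s CS CT := by
  apply settled_of_map_eq
  clear hT hcard hS hpos
  induction h with
  | refl => rfl
  | tail _ hstep ih =>
      obtain ⟨-, -, v, hv, hadj⟩ := hstep
      exact ih.trans (map_atLeast_eq s hv hadj)
end

section
/- For every integral flow f on G there exist |f| unit path flows on G, denoted f₁, …, f_{|f|}, such that each f_i is a subflow of f, and the sum f₁ ⊕ ⋯ ⊕ f_{|f|} is a subflow of f. -/
/-!
Induction on the value. A flow of positive value leaves some source `x`. Let `R` be the set of
vertices reachable from `x` along edges carrying flow; no flow leaves `R`, so its net outflow is
at most `0`. If `R` contained no sink, conservation and the absence of edges into sources would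
make that net outflow positive (it is strictly positive at `x`). So a sink is reachable, along a
simple path once cycles are cut out. By integrality every edge of that path carries at least one
unit, and subtracting the unit path flow leaves an integral flow of value one less.
-/

variable {V : Type*} [Fintype V] [DecidableEq V]

/-- The in-edges of a vertex `v` in the edge set `E`. -/
def inEdges (E : Finset (V × V)) (v : V) : Finset (V × V) := E.filter fun e => e.2 = v

/-- The out-edges of a vertex `v` in the edge set `E`. -/
def outEdges (E : Finset (V × V)) (v : V) : Finset (V × V) := E.filter fun e => e.1 = v

/-- A flow on the directed graph `(V, E)` with sources `X` and sinks `Z`: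
a non-negative function on the edges (encoded as a total function vanishing off `E`)
satisfying conservation at every vertex outside `X ∪ Z`. -/
def IsFlow (E : Finset (V × V)) (X Z : Finset V) (f : V × V → ℝ) : Prop :=
  (∀ e ∈ E, 0 ≤ f e) ∧ (∀ e ∉ E, f e = 0) ∧
    ∀ v : V, v ∉ X → v ∉ Z → ∑ e ∈ inEdges E v, f e = ∑ e ∈ outEdges E v, f e

/-- The value of a flow: the total flow out of the sources. -/
def flowValue (E : Finset (V × V)) (X : Finset V) (f : V × V → ℝ) : ℝ :=
  ∑ x ∈ X, ∑ e ∈ outEdges E x, f e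

/-- An `(X, Z)`-path: a directed path in `(V, E)` from a vertex of `X` to a vertex of `Z`. -/
def IsXZPath (E : Finset (V × V)) (X Z : Finset V) (p : List V) : Prop :=
  ∃ h : p ≠ [], p.head h ∈ X ∧ p.getLast h ∈ Z ∧ p.Nodup ∧
    List.Chain' (fun a b => (a, b) ∈ E) p

/-- A path flow: a flow that is positive on all edges of some `(X, Z)`-path
and zero on all other edges. -/
def IsPathFlow (E : Finset (V × V)) (X Z : Finset V) (f : V × V → ℝ) : Prop :=
  IsFlow E X Z f ∧ ∃ p : List V, IsXZPath E X Z p ∧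
    (∀ e ∈ p.zip p.tail, 0 < f e) ∧ ∀ e ∉ p.zip p.tail, f e = 0

/-- A unit path flow: a path flow of value 1. -/
def IsUnitPathFlow (E : Finset (V × V)) (X Z : Finset V) (f : V × V → ℝ) : Prop :=
  IsPathFlow E X Z f ∧ flowValue E X f = 1

open Finset

namespace List

variable {α : Type*}

lemma map_fst_zip_tail : ∀ l : List α, (l.zip l.tail).map Prod.fst = l.dropLast
  | [] | [_] => rfl
  | a :: b :: t => by simpa using map_fst_zip_tail (b :: t)

lemma map_snd_zip_tail (l : List α) : (l.zip l.tail).map Prod.snd = l.tail :=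
  map_snd_zip (by simp)

lemma IsChain.rel_of_mem_zip_tail {r : α → α → Prop} :
    ∀ {l : List α}, l.IsChain r → ∀ e ∈ l.zip l.tail, r e.1 e.2
  | [], _, _, he | [_], _, _, he => by simp at he
  | a :: b :: t, hl, e, he => by
    rw [isChain_cons_cons] at hl
    rcases mem_cons.1 he with rfl | he
    · exact hl.1
    · exact hl.2.rel_of_mem_zip_tail e he

end List

lemma Relation.ReflTransGen.exists_nodup_isChain_cons {α : Type*} {r : α → α → Prop} {a b : α}
    (h : Relation.ReflTransGen r a b) :
    ∃ l, (a :: l).IsChain r ∧ (a :: l).Nodup ∧ (a :: l).getLast (List.cons_ne_nil _ _) = b := by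
  classical
  induction h using Relation.ReflTransGen.head_induction_on with
  | refl => exact ⟨[], .singleton _, List.nodup_singleton _, rfl⟩
  | @head a c hac _ ih =>
    obtain ⟨l, hchain, hnodup, hlast⟩ := ih
    by_cases ha : a ∈ c :: l
    · obtain ⟨s, t, hst⟩ := List.append_of_mem ha
      simp only [hst] at hchain hnodup hlast
      refine ⟨t, hchain.right_of_append, hnodup.sublist (List.sublist_append_right _ _), ?_⟩
      rwa [List.getLast_append_of_ne_nil _ (List.cons_ne_nil _ _)] at hlast
    · exact ⟨c :: l, hchain.cons (by simpa using hac), List.nodup_cons.2 ⟨ha, hnodup⟩,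
        by rwa [List.getLast_cons]⟩

section Flows

omit [Fintype V]

variable {E : Finset (V × V)} {X Z : Finset V} {f g : V × V → ℝ}

lemma IsFlow.nonneg (hf : IsFlow E X Z f) (e : V × V) : 0 ≤ f e := by
  by_cases he : e ∈ E
  · exact hf.1 e he
  · exact (hf.2.1 e he).ge

lemma IsFlow.mem_of_pos (hf : IsFlow E X Z f) {e : V × V} (he : 0 < f e) : e ∈ E := by
  by_contra h
  exact he.ne' (hf.2.1 e h)

lemma IsFlow.sub (hf : IsFlow E X Z f) (hg : IsFlow E X Z g) (hle : ∀ e, g e ≤ f e) :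
    IsFlow E X Z (f - g) := by
  refine ⟨fun e _ => sub_nonneg.2 (hle e), fun e he => by simp [hf.2.1 e he, hg.2.1 e he],
    fun v hvX hvZ => ?_⟩
  simp only [Pi.sub_apply, sum_sub_distrib, hf.2.2 v hvX hvZ, hg.2.2 v hvX hvZ]

lemma flowValue_sub : flowValue E X (f - g) = flowValue E X f - flowValue E X g := by
  simp only [flowValue, Pi.sub_apply, sum_sub_distrib]

lemma exists_flowValue_eq_natCast (hint : ∀ e, ∃ n : ℕ, f e = n) :
    ∃ M : ℕ, flowValue E X f = M := by
  choose n hn using hint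
  exact ⟨∑ x ∈ X, ∑ e ∈ outEdges E x, n e, by simp [flowValue, hn]⟩

lemma sum_sum_outEdges (R : Finset V) (f : V × V → ℝ) :
    ∑ v ∈ R, ∑ e ∈ outEdges E v, f e = ∑ e ∈ E with e.1 ∈ R, f e :=
  sum_fiberwise_eq_sum_filter E R Prod.fst f

lemma sum_sum_inEdges (R : Finset V) (f : V × V → ℝ) :
    ∑ v ∈ R, ∑ e ∈ inEdges E v, f e = ∑ e ∈ E with e.2 ∈ R, f e :=
  sum_fiberwise_eq_sum_filter E R Prod.snd f

end Flows

section PathIndicator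

omit [Fintype V]

def pathIndicator (p : List V) : V × V → ℝ := fun e => if e ∈ p.zip p.tail then 1 else 0

lemma sum_filter_indicator_of_nodup_map {α β : Type*} [DecidableEq β]
    (s : Finset α) (L : List α) [DecidablePred (· ∈ L)] (π : α → β) (hL : ∀ e ∈ L, e ∈ s)
    (hnd : (L.map π).Nodup) (v : β) :
    ∑ e ∈ s with π e = v, (if e ∈ L then (1 : ℝ) else 0) = if v ∈ L.map π then 1 else 0 := by
  split_ifs with hv
  · obtain ⟨e₀, he₀, rfl⟩ := List.mem_map.1 hv
    rw [sum_eq_single_of_mem (s := s.filter (π · = π e₀)) e₀ (mem_filter.2 ⟨hL e₀ he₀, rfl⟩)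
      fun e he hne => ?_, if_pos he₀]
    rw [mem_filter] at he
    exact if_neg fun heL => hne (List.inj_on_of_nodup_map hnd heL he₀ he.2)
  · refine sum_eq_zero fun e he => if_neg fun heL => hv ?_
    exact (mem_filter.1 he).2 ▸ List.mem_map_of_mem heL

variable {E : Finset (V × V)} {X Z : Finset V} {p : List V}

lemma sum_outEdges_pathIndicator (hp : p.Nodup) (hE : p.IsChain fun a b => (a, b) ∈ E) (v : V) :
    ∑ e ∈ outEdges E v, pathIndicator p e = if v ∈ p.dropLast then 1 else 0 := by
  have h := sum_filter_indicator_of_nodup_map E (p.zip p.tail) Prod.fst hE.rel_of_mem_zip_tail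
    (by rw [p.map_fst_zip_tail]; exact hp.sublist p.dropLast_sublist) v
  rw [p.map_fst_zip_tail] at h
  exact h

lemma sum_inEdges_pathIndicator (hp : p.Nodup) (hE : p.IsChain fun a b => (a, b) ∈ E) (v : V) :
    ∑ e ∈ inEdges E v, pathIndicator p e = if v ∈ p.tail then 1 else 0 := by
  have h := sum_filter_indicator_of_nodup_map E (p.zip p.tail) Prod.snd hE.rel_of_mem_zip_tail
    (by rw [p.map_snd_zip_tail]; exact hp.sublist p.tail_sublist) v
  rw [p.map_snd_zip_tail] at h
  exact h

lemma IsXZPath.isUnitPathFlow_pathIndicator (hXZ : Disjoint X Z) (hX : ∀ e ∈ E, e.2 ∉ X)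
    (hp : IsXZPath E X Z p) : IsUnitPathFlow E X Z (pathIndicator p) := by
  obtain ⟨hne, hhead, hlast, hnd, hchain⟩ := hp
  have hchain : p.IsChain fun a b => (a, b) ∈ E := hchain
  have htail_mem : ∀ v, v ≠ p.head hne → (v ∈ p.tail ↔ v ∈ p) := fun v hv => by
    nth_rw 2 [← List.cons_head_tail hne]
    rw [List.mem_cons, or_iff_right hv]
  have hdropLast_mem : ∀ v, v ≠ p.getLast hne → (v ∈ p.dropLast ↔ v ∈ p) := fun v hv => by
    nth_rw 2 [← List.dropLast_append_getLast hne]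
    rw [List.mem_append, List.mem_singleton, or_iff_left hv]
  have htail_notMem : ∀ v ∈ p.tail, v ∉ X := fun v hv => by
    rw [← p.map_snd_zip_tail] at hv
    obtain ⟨e, he, rfl⟩ := List.mem_map.1 hv
    exact hX e (hchain.rel_of_mem_zip_tail e he)
  have hsource : ∀ x ∈ X, (x ∈ p.dropLast ↔ x = p.head hne) := fun x hx => by
    refine ⟨fun h => ?_, ?_⟩
    · by_contra hne_head
      exact htail_notMem x ((htail_mem x hne_head).2 (p.dropLast_subset h)) hx
    · rintro rfl
      exact (hdropLast_mem _ fun h => disjoint_left.1 hXZ hhead (by rwa [h])).2 (p.head_mem hne)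
  refine ⟨⟨⟨fun e _ => ?_, fun e he => if_neg ?_, fun v hvX hvZ => ?_⟩, p,
    ⟨hne, hhead, hlast, hnd, hchain⟩, fun e he => by simp [pathIndicator, he],
    fun e he => by simp [pathIndicator, he]⟩, ?_⟩
  · unfold pathIndicator
    split_ifs <;> norm_num
  · exact fun he' => he (hchain.rel_of_mem_zip_tail e he')
  · rw [sum_inEdges_pathIndicator hnd hchain, sum_outEdges_pathIndicator hnd hchain]
    simp only [htail_mem v fun h => hvX (h ▸ hhead), hdropLast_mem v fun h => hvZ (h ▸ hlast)]
  · calc flowValue E X (pathIndicator p)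
        = ∑ x ∈ X, if x = p.head hne then (1 : ℝ) else 0 := sum_congr rfl fun x hx => by
          simp only [sum_outEdges_pathIndicator hnd hchain, hsource x hx]
      _ = 1 := by rw [sum_ite_eq' X, if_pos hhead]

end PathIndicator

section Decomposition

variable {E : Finset (V × V)} {X Z : Finset V} {f : V × V → ℝ}

lemma IsFlow.exists_sink_reachable (hf : IsFlow E X Z f) (hX : ∀ e ∈ E, e.2 ∉ X) {x : V}
    (hx : x ∈ X) (hpos : 0 < ∑ e ∈ outEdges E x, f e) :
    ∃ z ∈ Z, Relation.ReflTransGen (fun a b => 0 < f (a, b)) x z := by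
  classical
  by_contra! hZ
  set R : Finset V := univ.filter (Relation.ReflTransGen (fun a b => 0 < f (a, b)) x)
  have hin_source : ∀ v ∈ X, ∑ e ∈ inEdges E v, f e = 0 := fun v hv =>
    sum_eq_zero fun e he => by
      rw [inEdges, mem_filter] at he
      exact absurd (he.2 ▸ hv) (hX e he.1)
  have hnet : ∑ v ∈ R, ∑ e ∈ inEdges E v, f e < ∑ v ∈ R, ∑ e ∈ outEdges E v, f e := by
    refine sum_lt_sum (fun v hv => ?_)
      ⟨x, mem_filter.2 ⟨mem_univ _, .refl⟩, by rwa [hin_source x hx]⟩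
    by_cases hvX : v ∈ X
    · rw [hin_source v hvX]
      exact sum_nonneg fun e _ => hf.nonneg e
    · exact (hf.2.2 v hvX fun hvZ => hZ v hvZ (by simpa [R] using hv)).le
  have hclosed : ∑ v ∈ R, ∑ e ∈ outEdges E v, f e ≤ ∑ v ∈ R, ∑ e ∈ inEdges E v, f e := by
    rw [sum_sum_outEdges, sum_sum_inEdges, sum_filter, sum_filter]
    refine sum_le_sum fun e _ => ?_
    split_ifs with h1 h2 h2
    · exact le_rfl
    · refine (eq_or_lt_of_le (hf.nonneg e)).elim (fun h => h.ge) fun h => absurd ?_ h2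
      simpa [R] using (show Relation.ReflTransGen _ x e.1 by simpa [R] using h1).tail h
    · exact hf.nonneg e
    · exact le_rfl
  exact hclosed.not_gt hnet

lemma IsFlow.exists_unitPathFlows_sum_le (hXZ : Disjoint X Z) (hX : ∀ e ∈ E, e.2 ∉ X) {M : ℕ}
    (hf : IsFlow E X Z f) (hint : ∀ e, ∃ n : ℕ, f e = n) (hval : flowValue E X f = M) :
    ∃ g : Fin M → V × V → ℝ, (∀ i, IsUnitPathFlow E X Z (g i)) ∧ ∀ e, ∑ i, g i e ≤ f e := by
  induction M generalizing f with
  | zero => exact ⟨Fin.elim0, fun i => i.elim0, fun e => by simpa using hf.nonneg e⟩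
  | succ M ih =>
    obtain ⟨x, hx, hpos⟩ : ∃ x ∈ X, 0 < ∑ e ∈ outEdges E x, f e := by
      refine exists_lt_of_sum_lt ?_
      rw [sum_const_zero, ← flowValue, hval]
      positivity
    obtain ⟨z, hz, hreach⟩ := hf.exists_sink_reachable hX hx hpos
    obtain ⟨l, hchain, hnd, hlast⟩ := hreach.exists_nodup_isChain_cons
    have hpath : IsXZPath E X Z (x :: l) :=
      ⟨List.cons_ne_nil _ _, hx, hlast ▸ hz, hnd, hchain.imp fun _ _ => hf.mem_of_pos⟩
    set u := pathIndicator (x :: l)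
    have hu : IsUnitPathFlow E X Z u := hpath.isUnitPathFlow_pathIndicator hXZ hX
    have hu_nat : ∀ e, ∃ n : ℕ, u e = n := fun e =>
      ⟨if e ∈ (x :: l).zip (x :: l).tail then 1 else 0, by
        simp only [u, pathIndicator]
        split_ifs <;> simp⟩
    have hu_le : ∀ e, u e ≤ f e := fun e => by
      simp only [u, pathIndicator]
      split_ifs with he
      · obtain ⟨n, hn⟩ := hint e
        have hpos := hchain.rel_of_mem_zip_tail e he
        rw [hn] at hpos ⊢
        exact Nat.one_le_cast.2 (Nat.cast_pos.1 hpos)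
      · exact hf.nonneg e
    have hint' : ∀ e, ∃ n : ℕ, (f - u) e = n := fun e => by
      obtain ⟨m, hm⟩ := hint e
      obtain ⟨n, hn⟩ := hu_nat e
      have hnm : n ≤ m := by exact_mod_cast hm ▸ hn ▸ hu_le e
      exact ⟨m - n, by rw [Pi.sub_apply, hm, hn, Nat.cast_sub hnm]⟩
    obtain ⟨g, hg, hg_le⟩ := ih (hf.sub hu.1.1 hu_le) hint'
      (by rw [flowValue_sub, hval, hu.2]; push_cast; ring)
    refine ⟨Fin.cons u g, Fin.cases hu hg, fun e => ?_⟩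
    rw [Fin.sum_univ_succ]
    simp only [Fin.cons_zero, Fin.cons_succ]
    linarith [hg_le e, show (f - u) e = f e - u e from rfl]

end Decomposition

theorem stmt13_general (E : Finset (V × V)) (X Z : Finset V) (hXZ : Disjoint X Z)
    (hX : ∀ e ∈ E, e.2 ∉ X)
    (f : V × V → ℝ) (hf : IsFlow E X Z f) (hint : ∀ e, ∃ n : ℕ, f e = n) :
    ∃ (N : ℕ) (g : Fin N → V × V → ℝ),
      (N : ℝ) = flowValue E X f ∧
      (∀ i, IsUnitPathFlow E X Z (g i)) ∧
      (∀ i, ∀ e, g i e ≤ f e) ∧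
      (∀ e, (∑ i, g i e) ≤ f e) := by
  obtain ⟨M, hM⟩ := exists_flowValue_eq_natCast hint
  obtain ⟨g, hg, hg_le⟩ := hf.exists_unitPathFlows_sum_le hXZ hX hint hM
  refine ⟨M, g, hM.symm, hg, fun i e => ?_, hg_le⟩
  exact (single_le_sum (fun j _ => (hg j).1.1.nonneg e) (mem_univ i)).trans (hg_le e)

theorem stmt13 (E : Finset (V × V)) (X Z : Finset V) (hXZ : Disjoint X Z)
    (hX : ∀ e ∈ E, e.2 ∉ X) (hZ : ∀ e ∈ E, e.1 ∉ Z)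
    (f : V × V → ℝ) (hf : IsFlow E X Z f) (hint : ∀ e, ∃ n : ℕ, f e = n) :
    ∃ (N : ℕ) (g : Fin N → V × V → ℝ),
      (N : ℝ) = flowValue E X f ∧
      (∀ i, IsUnitPathFlow E X Z (g i)) ∧
      (∀ i, ∀ e, g i e ≤ f e) ∧
      (∀ e, (∑ i, g i e) ≤ f e) :=
  stmt13_general E X Z hXZ hX f hf hint
end

section
/- Fix positive integers β and κ, and let C_S, C_T be legal configurations for capacity κ with |C_S| = |C_T| and U(C_S) = U(C_T) = U. The Partition ILP associated with (C_S, C_T, β, κ) is feasible if and only if there exist a β-bounded partition P of U and a P-conforming reconfiguration sequence for capacity κ from C_S to C_T. -/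
/-- A subconfiguration: a nonempty multiset of at most `β` bunches, each of volume
at most `κ`, whose items form a sub-multiset of `U`. -/
def IsSubconf (β κ : ℕ) (U : Multiset ℕ) (D : Config) : Prop :=
  D ≠ 0 ∧ Multiset.card D ≤ β ∧ (∀ B ∈ D, vol B ≤ κ) ∧ D.sum ≤ U

/-- Feasibility of the Partition ILP associated with `(CS, CT, β, κ)`.
The graph `G` has vertices `x_D, y_D, z_D` for `D ∈ β-Subs` and edges
`x_D → y_D`, `y_D → y_{D'}` (for adjacent `D, D'`), and `y_D → z_D`.
Here `fx D`, `fz D` and `fy D D'` are the (non-negative integer) flow values on the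
edges `x_D → y_D`, `y_D → z_D` and `y_D → y_{D'}` respectively, and the demands are
`d(x_D) = -(dx D) ≤ 0` and `d(z_D) = dz D ≥ 0`; all variables vanish outside the
(finite) edge set of `G` and have finite support. -/
def PartitionILPFeasible (β κ : ℕ) (CS CT : Config) : Prop :=
  ∃ (fx fz dx dz : Config → ℕ) (fy : Config → Config → ℕ),
    (∀ D, ¬ IsSubconf β κ CS.sum D → fx D = 0 ∧ fz D = 0 ∧ dx D = 0 ∧ dz D = 0) ∧
    (∀ D D', ¬ (IsSubconf β κ CS.sum D ∧ IsSubconf β κ CS.sum D' ∧ Adjacent κ D D') →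
      fy D D' = 0) ∧
    (Function.support dx).Finite ∧ (Function.support dz).Finite ∧
    (Function.support fx).Finite ∧ (Function.support fz).Finite ∧
    (Function.support (Function.uncurry fy)).Finite ∧
    (∀ D, IsSubconf β κ CS.sum D →
      fx D = dx D ∧ fz D = dz D ∧
      fx D + ∑ᶠ D', fy D' D = fz D + ∑ᶠ D', fy D D') ∧
    (∀ B : Bunch, B ≤ CS.sum → vol B ≤ κ →
      (∑ᶠ D, Multiset.count B D * dx D) = Multiset.count B CS ∧
      (∑ᶠ D, Multiset.count B D * dz D) = Multiset.count B CT)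

/-- `P` is a partition of the multiset `U` of items: a finite sequence of parts
`(U_i, k_i)` with `k_i` a positive number of bunches and the `U_i` summing to `U`. -/
def IsPartition (U : Multiset ℕ) (P : List (Multiset ℕ × ℕ)) : Prop :=
  (∀ p ∈ P, 0 < p.2) ∧ (P.map Prod.fst).sum = U

/-- `P` is `β`-bounded: every part uses at most `β` bunches. -/
def BBounded (β : ℕ) (P : List (Multiset ℕ × ℕ)) : Prop := ∀ p ∈ P, p.2 ≤ β

/-- `A` is an assignment of the partition `P` for capacity `κ`: a sequence of portions,
where the `i`-th portion is a multiset of exactly `k_i` bunches, each of volume at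
most `κ`, whose multiset union of items equals `U_i`. -/
def IsAssignment (κ : ℕ) (P : List (Multiset ℕ × ℕ)) (A : List Config) : Prop :=
  List.Forall₂
    (fun p Ai => Multiset.card Ai = p.2 ∧ Multiset.sum Ai = p.1 ∧ ∀ B ∈ Ai, vol B ≤ κ)
    P A

/-- Two assignments are adjacent: they agree in all but exactly one index `j`, and
their `j`-th portions are adjacent configurations. -/
def AdjAssign (κ : ℕ) (A A' : List Config) : Prop :=
  A.length = A'.length ∧ ∃ j < A.length,
    Adjacent κ (A.getD j 0) (A'.getD j 0) ∧
    ∀ i < A.length, i ≠ j → A.getD i 0 = A'.getD i 0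

/-- There exist a `β`-bounded partition `P` of the underlying items and a
`P`-conforming reconfiguration sequence for capacity `κ` from `CS` to `CT`. -/
def PConformReconf (β κ : ℕ) (CS CT : Config) : Prop :=
  ∃ P : List (Multiset ℕ × ℕ), IsPartition CS.sum P ∧ BBounded β P ∧
    ∃ AS AT : List Config, IsAssignment κ P AS ∧ IsAssignment κ P AT ∧
      AS.sum = CS ∧ AT.sum = CT ∧
      Relation.ReflTransGen
        (fun A A' => IsAssignment κ P A ∧ IsAssignment κ P A' ∧ AdjAssign κ A A') AS AT

/-! Reading every variable of an integral solution of the Partition ILP as a multiplicity turns it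
into multisets `E`, `Z` of subconfigurations and `F` of adjacent pairs of subconfigurations with
`E + F.map Prod.snd = Z + F.map Prod.fst`, and the demand constraints say exactly that the bunches
of `E` and `Z` make up `C_S` and `C_T`. Such a flow splits into walks pairing the elements of `E`
with those of `Z`. Taking the starting subconfigurations of the walks as the parts of `P`, the
portions are reconfigured one after another along their walks. Conversely, the single-portion
moves of a `P`-conforming reconfiguration sequence are the edges of a flow from the initial to the
final portions. -/

open Relation

namespace Multiset

variable {α β : Type*} {R : α → α → Prop}

lemma finite_support_count [DecidableEq α] (s : Multiset α) :
    (Function.support fun a => s.count a).Finite :=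
  s.finite_toSet.subset fun _ ha => count_ne_zero.1 ha

lemma exists_count_eq [DecidableEq α] (f : α → ℕ) (hf : (Function.support f).Finite) :
    ∃ s : Multiset α, ∀ a, s.count a = f a :=
  ⟨Finsupp.toMultiset (Finsupp.ofSupportFinite f hf), fun a => by
    rw [Finsupp.count_toMultiset, Finsupp.ofSupportFinite_coe]⟩

lemma finsum_count_mk_eq_count_map_fst [DecidableEq α] [DecidableEq β]
    (F : Multiset (α × β)) (a : α) :
    ∑ᶠ b, F.count (a, b) = (F.map Prod.fst).count a := by
  induction F using Multiset.induction_on with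
  | empty => simp
  | cons q F ih =>
    have hF : (Function.support fun b => F.count (a, b)).Finite :=
      F.finite_support_count.preimage (Prod.mk_right_injective a).injOn
    have hq : (Function.support fun b => if (a, b) = q then 1 else 0).Finite :=
      (Set.finite_singleton q.2).subset fun b hb => by
        by_contra h; exact hb (if_neg fun e => h (by simp [← e]))
    simp only [count_cons, map_cons]
    rw [finsum_add_distrib hF hq, ih]
    obtain ⟨a', b'⟩ := q
    by_cases h : a = a'
    · subst h
      simp [finsum_eq_single _ b' fun b hb => if_neg hb]
    · simp [h]

lemma finsum_count_mk_eq_count_map_snd [DecidableEq α] [DecidableEq β]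
    (F : Multiset (α × β)) (b : β) :
    ∑ᶠ a, F.count (a, b) = (F.map Prod.snd).count b := by
  have := finsum_count_mk_eq_count_map_fst (F.map Prod.swap) b
  rw [map_map, show Prod.fst ∘ Prod.swap = (Prod.snd : α × β → β) from rfl] at this
  rw [← this]
  exact finsum_congr fun a => (count_map_eq_count' _ _ Prod.swap_injective (a, b)).symm

lemma count_sum_eq_finsum [DecidableEq α] (S : Multiset (Multiset α)) (a : α) :
    S.sum.count a = ∑ᶠ s, s.count a * S.count s := by
  rw [finsum_eq_sum_of_support_subset _ (s := S.toFinset) fun s hs => by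
    simpa using right_ne_zero_of_mul hs]
  simpa [mul_comm, Finset.sum_multiset_map_count] using count_sum (m := S) (f := id) (a := a)

lemma exists_walk_pairing_of_flow [DecidableEq α] (F : Multiset (α × α))
    (hF : ∀ e ∈ F, R e.1 e.2) {E Z : Multiset α}
    (h : E + F.map Prod.snd = Z + F.map Prod.fst) :
    ∃ L : Multiset (α × α), (∀ p ∈ L, ReflTransGen R p.1 p.2) ∧
      L.map Prod.fst = E ∧ L.map Prod.snd = Z := by
  induction hn : card E + card F using Nat.strong_induction_on generalizing E Z F with
  | _ n ih =>
    subst hn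
    rcases E.empty_or_exists_mem with rfl | ⟨D, hD⟩
    · have : card Z + card F = card F := by simpa using (congrArg card h).symm
      exact ⟨0, by simp, by simp, by simp [card_eq_zero.1 (by omega : card Z = 0)]⟩
    obtain ⟨E, rfl⟩ := exists_cons_of_mem hD
    by_cases hDZ : D ∈ Z
    · obtain ⟨Z, rfl⟩ := exists_cons_of_mem hDZ
      obtain ⟨L, hL, hfst, hsnd⟩ :=
        ih _ (by simp) F hF (E := E) (Z := Z) (by simpa [cons_add] using h) rfl
      refine ⟨(D, D) ::ₘ L, ?_, by simp [hfst], by simp [hsnd]⟩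
      simp only [mem_cons, forall_eq_or_imp]
      exact ⟨.refl, hL⟩
    -- `D` is not a sink, so flow leaves it along some edge `e`: pair up the remaining flow, in
    -- which the head of `e` has become a source, and extend the walk starting there back to `D`.
    have hDF : D ∈ F.map Prod.fst := by
      simpa [hDZ] using (show D ∈ Z + F.map Prod.fst from h ▸ by simp)
    obtain ⟨e, he, rfl⟩ := mem_map.1 hDF
    obtain ⟨F, rfl⟩ := exists_cons_of_mem he
    obtain ⟨L, hL, hfst, hsnd⟩ :=
      ih _ (by simp) F (fun e' he' => hF e' (mem_cons_of_mem he')) (E := e.2 ::ₘ E)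
        (Z := Z) (by simpa [cons_add, add_cons, cons_swap e.2 e.1] using h) rfl
    obtain ⟨q, hq, hqe⟩ := mem_map.1 (hfst ▸ mem_cons_self e.2 E : e.2 ∈ L.map Prod.fst)
    refine ⟨(e.1, q.2) ::ₘ L.erase q, ?_, ?_, ?_⟩
    · simp only [mem_cons, forall_eq_or_imp]
      exact ⟨.head (hF e (mem_cons_self e F)) (hqe ▸ hL q hq),
        fun p hp => hL p (mem_of_mem_erase hp)⟩
    · simp [map_erase_of_mem _ _ hq, hfst, hqe]
    · simp [map_erase_of_mem _ _ hq, hsnd, cons_erase (hsnd ▸ mem_map_of_mem Prod.snd hq)]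

lemma exists_flow_of_reflTransGen {ι : Type*} {r : ι → ι → Prop} (f : ι → Multiset α)
    (hr : ∀ a b, r a b → ∃ x y, R x y ∧ y ::ₘ f a = x ::ₘ f b) {a b : ι}
    (h : ReflTransGen r a b) :
    ∃ F : Multiset (α × α), (∀ e ∈ F, R e.1 e.2) ∧
      f a + F.map Prod.snd = f b + F.map Prod.fst := by
  induction h with
  | refl => exact ⟨0, by simp, rfl⟩
  | tail _ hbc ih =>
    obtain ⟨F, hF, hflow⟩ := ih
    obtain ⟨x, y, hxy, hswap⟩ := hr _ _ hbc
    refine ⟨(x, y) ::ₘ F, ?_, ?_⟩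
    · simp only [mem_cons, forall_eq_or_imp]
      exact ⟨hxy, hF⟩
    · simp only [map_cons, add_cons, hflow, ← cons_add, hswap]

end Multiset

lemma List.cons_coe_eq_cons_coe_of_getD_eq {α : Type*} {l l' : List α} {d : α}
    (hlen : l.length = l'.length) {j : ℕ} (hj : j < l.length)
    (h : ∀ i < l.length, i ≠ j → l.getD i d = l'.getD i d) :
    l'.getD j d ::ₘ (l : Multiset α) = l.getD j d ::ₘ (l' : Multiset α) := by
  set a := l'.getD j d
  have hset : l' = l.set j a := by
    refine List.ext_getElem (by simp [hlen]) fun i hi' hi => ?_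
    rw [List.getElem_set]
    split_ifs with hij
    · subst hij; exact (List.getD_eq_getElem _ _ hi').symm
    · have := h i (hlen ▸ hi') (Ne.symm hij)
      rwa [List.getD_eq_getElem _ _ (hlen ▸ hi'), List.getD_eq_getElem _ _ hi', eq_comm] at this
  calc a ::ₘ (l : Multiset α) = a ::ₘ l[j] ::ₘ (l.eraseIdx j : Multiset α) := by
        rw [Multiset.coe_eq_coe.2 (List.getElem_cons_eraseIdx_perm hj).symm, ← Multiset.cons_coe]
    _ = l[j] ::ₘ a ::ₘ (l.eraseIdx j : Multiset α) := Multiset.cons_swap _ _ _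
    _ = l.getD j d ::ₘ (l' : Multiset α) := by
        rw [List.getD_eq_getElem _ _ hj, hset,
          Multiset.coe_eq_coe.2 (List.set_perm_cons_eraseIdx hj a), Multiset.cons_coe]

lemma List.Forall₂.exists_of_mem_right {α β : Type*} {R : α → β → Prop} {l₁ : List α}
    {l₂ : List β} (h : List.Forall₂ R l₁ l₂) {b : β} (hb : b ∈ l₂) :
    ∃ a ∈ l₁, R a b := by
  induction h with
  | nil => simp at hb
  | cons hab _ ih =>
    rcases List.mem_cons.1 hb with rfl | hb
    · exact ⟨_, List.mem_cons_self, hab⟩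
    · obtain ⟨a, ha, hR⟩ := ih hb
      exact ⟨a, List.mem_cons_of_mem _ ha, hR⟩

section Reconfiguration

variable {β κ : ℕ} {U : Multiset ℕ} {C C' : Config} {P : List (Multiset ℕ × ℕ)}
  {A A' : List Config} {p : Multiset ℕ × ℕ}

lemma Adjacent.card_eq (h : Adjacent κ C C') : Multiset.card C' = Multiset.card C := by
  obtain ⟨u, rest, Bd, Br, -, -, rfl, rfl⟩ := h
  simp

lemma Adjacent.sum_eq (h : Adjacent κ C C') : C'.sum = C.sum := by
  obtain ⟨u, rest, Bd, Br, hu, -, rfl, rfl⟩ := h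
  conv_rhs => rw [← Multiset.cons_erase hu]
  simp [Multiset.cons_add, Multiset.add_cons]

-- `IsAssignment κ P A` unfolds to `List.Forall₂ (IsPortion κ) P A`.
def IsPortion (κ : ℕ) (p : Multiset ℕ × ℕ) (C : Config) : Prop :=
  Multiset.card C = p.2 ∧ C.sum = p.1 ∧ Legal κ C

lemma Step.isPortion (h : Step κ C C') (hC : IsPortion κ p C) : IsPortion κ p C' :=
  ⟨h.2.2.card_eq.trans hC.1, h.2.2.sum_eq.trans hC.2.1, h.2.1⟩

lemma isPortion_of_reflTransGen (h : ReflTransGen (Step κ) C C') (hC : IsPortion κ p C) :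
    IsPortion κ p C' := by
  induction h with
  | refl => exact hC
  | tail _ hstep ih => exact hstep.isPortion ih

def AssignStep (κ : ℕ) (P : List (Multiset ℕ × ℕ)) (A A' : List Config) : Prop :=
  IsAssignment κ P A ∧ IsAssignment κ P A' ∧ AdjAssign κ A A'

lemma assignStep_cons_of_adjacent (hA : IsAssignment κ P A) (hC : IsPortion κ p C)
    (hC' : IsPortion κ p C') (h : Adjacent κ C C') :
    AssignStep κ (p :: P) (C :: A) (C' :: A) := by
  refine ⟨.cons hC hA, .cons hC' hA, rfl, 0, by simp, by simpa using h, ?_⟩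
  rintro (_ | i) _ hi
  · exact absurd rfl hi
  · rfl

lemma AssignStep.cons (hC : IsPortion κ p C) (h : AssignStep κ P A A') :
    AssignStep κ (p :: P) (C :: A) (C :: A') := by
  obtain ⟨hA, hA', hlen, j, hj, hadj, hrest⟩ := h
  refine ⟨.cons hC hA, .cons hC hA', by simp [hlen], j + 1, by simpa using hj,
    by simpa using hadj, ?_⟩
  rintro (_ | i) hi hij
  · rfl
  · exact hrest i (by simpa using hi) (by omega)

lemma reflTransGen_assignStep_cons_left (hA : IsAssignment κ P A) (hC : IsPortion κ p C)
    (h : ReflTransGen (Step κ) C C') :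
    ReflTransGen (AssignStep κ (p :: P)) (C :: A) (C' :: A) := by
  induction h with
  | refl => rfl
  | tail hwalk hstep ih =>
    have hmid := isPortion_of_reflTransGen hwalk hC
    exact ih.tail (assignStep_cons_of_adjacent hA hmid (hstep.isPortion hmid) hstep.2.2)

lemma reflTransGen_assignStep_cons_right (hC : IsPortion κ p C)
    (h : ReflTransGen (AssignStep κ P) A A') :
    ReflTransGen (AssignStep κ (p :: P)) (C :: A) (C :: A') :=
  ReflTransGen.lift (C :: ·) (fun _ _ => AssignStep.cons hC) _ _ h

def partitionOf (L : List (Config × Config)) : List (Multiset ℕ × ℕ) :=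
  L.map fun q => (q.1.sum, Multiset.card q.1)

lemma reflTransGen_assignStep_of_walks (L : List (Config × Config))
    (hL : ∀ q ∈ L, Legal κ q.1 ∧ ReflTransGen (Step κ) q.1 q.2) :
    IsAssignment κ (partitionOf L) (L.map Prod.fst) ∧
      IsAssignment κ (partitionOf L) (L.map Prod.snd) ∧
      ReflTransGen (AssignStep κ (partitionOf L)) (L.map Prod.fst) (L.map Prod.snd) := by
  induction L with
  | nil => exact ⟨.nil, .nil, .refl⟩
  | cons q L ih =>
    obtain ⟨hq, hwalk⟩ := hL q List.mem_cons_self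
    obtain ⟨hfst, hsnd, hchain⟩ := ih fun q' hq' => hL q' (List.mem_cons_of_mem _ hq')
    have hstart : IsPortion κ (q.1.sum, Multiset.card q.1) q.1 := ⟨rfl, rfl, hq⟩
    have hend := isPortion_of_reflTransGen hwalk hstart
    exact ⟨.cons hstart hfst, .cons hend hsnd,
      (reflTransGen_assignStep_cons_left hfst hstart hwalk).trans
        (reflTransGen_assignStep_cons_right hend hchain)⟩

def SubconfAdj (β κ : ℕ) (U : Multiset ℕ) (D D' : Config) : Prop :=
  IsSubconf β κ U D ∧ IsSubconf β κ U D' ∧ Adjacent κ D D'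

lemma IsSubconf.legal (h : IsSubconf β κ U C) : Legal κ C := h.2.2.1

lemma SubconfAdj.step (h : SubconfAdj β κ U C C') : Step κ C C' :=
  ⟨h.1.legal, h.2.1.legal, h.2.2⟩

lemma IsAssignment.isSubconf (hP : IsPartition U P) (hβ : BBounded β P)
    (hA : IsAssignment κ P A) (hC : C ∈ A) : IsSubconf β κ U C := by
  obtain ⟨p, hp, hcard, hsum, hlegal⟩ := hA.exists_of_mem_right hC
  refine ⟨fun h0 => ?_, hcard ▸ hβ p hp, hlegal, hsum ▸ hP.2 ▸ ?_⟩
  · simpa [h0, ← hcard] using hP.1 p hp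
  · exact List.le_sum_of_mem (List.mem_map_of_mem hp)

lemma AssignStep.exists_subconfAdj (hP : IsPartition U P) (hβ : BBounded β P)
    (h : AssignStep κ P A A') :
    ∃ D D', SubconfAdj β κ U D D' ∧ D' ::ₘ (A : Multiset Config) = D ::ₘ A' := by
  obtain ⟨hA, hA', hlen, j, hj, hadj, hrest⟩ := h
  have hmem : A.getD j 0 ∈ A := by
    rw [List.getD_eq_getElem _ _ hj]; exact List.getElem_mem hj
  have hmem' : A'.getD j 0 ∈ A' := by
    rw [List.getD_eq_getElem _ _ (hlen ▸ hj)]; exact List.getElem_mem _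
  exact ⟨_, _, ⟨hA.isSubconf hP hβ hmem, hA'.isSubconf hP hβ hmem', hadj⟩,
    List.cons_coe_eq_cons_coe_of_getD_eq hlen hj hrest⟩

end Reconfiguration

section Flow

variable {β κ : ℕ} {CS CT : Config}

/-- An integral flow of the Partition ILP, each variable read as a multiplicity: `E`, `Z` and `F`
contain `D`, `D` and `(D, D')` as often as the flow on `x_D y_D`, `y_D z_D` and `y_D y_{D'}`. -/
def IntegralFlow (β κ : ℕ) (CS CT : Config) : Prop :=
  ∃ (E Z : Multiset Config) (F : Multiset (Config × Config)),
    (∀ D ∈ E, IsSubconf β κ CS.sum D) ∧ (∀ D ∈ Z, IsSubconf β κ CS.sum D) ∧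
    (∀ e ∈ F, SubconfAdj β κ CS.sum e.1 e.2) ∧
    E + F.map Prod.snd = Z + F.map Prod.fst ∧ E.sum = CS ∧ Z.sum = CT

lemma sum_eq_of_finsum_count_mul_count_eq {U : Multiset ℕ} {E : Multiset Config} {C : Config}
    (hE : ∀ D ∈ E, IsSubconf β κ U D) (hC : ∀ B ∈ C, B ≤ U ∧ vol B ≤ κ)
    (h : ∀ B : Bunch, B ≤ U → vol B ≤ κ → ∑ᶠ D, D.count B * E.count D = C.count B) :
    E.sum = C := by
  ext B
  by_cases hB : B ≤ U ∧ vol B ≤ κ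
  · rw [Multiset.count_sum_eq_finsum, h B hB.1 hB.2]
  · rw [Multiset.count_eq_zero_of_notMem fun hm => hB (hC B hm),
      Multiset.count_eq_zero_of_notMem fun hm => ?_]
    obtain ⟨D, hD, hBD⟩ := Multiset.mem_join.1 hm
    exact hB ⟨(Multiset.le_sum_of_mem hBD).trans (hE D hD).2.2.2, (hE D hD).legal B hBD⟩

lemma integralFlow_of_partitionILPFeasible (hS : Legal κ CS) (hT : Legal κ CT)
    (hU : CS.sum = CT.sum) (h : PartitionILPFeasible β κ CS CT) : IntegralFlow β κ CS CT := by
  obtain ⟨fx, fz, dx, dz, fy, hzero, hfy, hdx, hdz, -, -, hfyfin, hcons, hdem⟩ := h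
  obtain ⟨E, hE⟩ := Multiset.exists_count_eq dx hdx
  obtain ⟨Z, hZ⟩ := Multiset.exists_count_eq dz hdz
  obtain ⟨F, hF⟩ := Multiset.exists_count_eq _ hfyfin
  have hEsub : ∀ D ∈ E, IsSubconf β κ CS.sum D := fun D hD => by
    by_contra hnot
    exact Multiset.count_ne_zero.2 hD ((hE D).trans (hzero D hnot).2.2.1)
  have hZsub : ∀ D ∈ Z, IsSubconf β κ CS.sum D := fun D hD => by
    by_contra hnot
    exact Multiset.count_ne_zero.2 hD ((hZ D).trans (hzero D hnot).2.2.2)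
  have hFadj : ∀ e ∈ F, SubconfAdj β κ CS.sum e.1 e.2 := fun e he => by
    by_contra hnot
    exact Multiset.count_ne_zero.2 he ((hF e).trans (hfy e.1 e.2 hnot))
  refine ⟨E, Z, F, hEsub, hZsub, hFadj, ?_, ?_, ?_⟩
  · ext D
    simp only [Multiset.count_add, hE, hZ, ← Multiset.finsum_count_mk_eq_count_map_fst,
      ← Multiset.finsum_count_mk_eq_count_map_snd, hF, Function.uncurry_apply_pair]
    by_cases hD : IsSubconf β κ CS.sum D
    · obtain ⟨hfx, hfz, hflow⟩ := hcons D hD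
      rwa [← hfx, ← hfz]
    · simp [(hzero D hD).2.2.1, (hzero D hD).2.2.2, hfy _ D fun h => hD h.2.1,
        hfy D _ fun h => hD h.1]
  · refine sum_eq_of_finsum_count_mul_count_eq hEsub
      (fun B hB => ⟨Multiset.le_sum_of_mem hB, hS B hB⟩) fun B hB hBκ => ?_
    simpa only [hE] using (hdem B hB hBκ).1
  · refine sum_eq_of_finsum_count_mul_count_eq hZsub
      (fun B hB => ⟨hU ▸ Multiset.le_sum_of_mem hB, hT B hB⟩) fun B hB hBκ => ?_
    simpa only [hZ] using (hdem B hB hBκ).2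

lemma partitionILPFeasible_of_integralFlow (h : IntegralFlow β κ CS CT) :
    PartitionILPFeasible β κ CS CT := by
  obtain ⟨E, Z, F, hE, hZ, hF, hflow, hES, hZT⟩ := h
  refine ⟨E.count, Z.count, E.count, Z.count, fun D D' => F.count (D, D'), fun D hD => ?_,
    fun D D' h => Multiset.count_eq_zero_of_notMem fun hm => h (hF _ hm),
    E.finite_support_count, Z.finite_support_count, E.finite_support_count,
    Z.finite_support_count, F.finite_support_count, fun D _ => ⟨rfl, rfl, ?_⟩,
    fun B _ _ => ⟨?_, ?_⟩⟩
  · have hE0 := Multiset.count_eq_zero_of_notMem fun hm => hD (hE D hm)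
    have hZ0 := Multiset.count_eq_zero_of_notMem fun hm => hD (hZ D hm)
    exact ⟨hE0, hZ0, hE0, hZ0⟩
  · rw [Multiset.finsum_count_mk_eq_count_map_snd, Multiset.finsum_count_mk_eq_count_map_fst,
      ← Multiset.count_add, ← Multiset.count_add, hflow]
  · rw [← Multiset.count_sum_eq_finsum, hES]
  · rw [← Multiset.count_sum_eq_finsum, hZT]

lemma pConformReconf_of_integralFlow (h : IntegralFlow β κ CS CT) :
    PConformReconf β κ CS CT := by
  obtain ⟨E, Z, F, hE, -, hF, hflow, hES, hZT⟩ := h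
  obtain ⟨L, hL, hfst, hsnd⟩ := Multiset.exists_walk_pairing_of_flow F hF hflow
  obtain ⟨l, rfl⟩ := Quotient.exists_rep L
  simp only [Multiset.quot_mk_to_coe, Multiset.map_coe] at hfst hsnd
  have hstart : ∀ q ∈ l, IsSubconf β κ CS.sum q.1 := fun q hq =>
    hE _ (hfst ▸ Multiset.mem_coe.2 (List.mem_map_of_mem hq))
  obtain ⟨hAS, hAT, hchain⟩ := reflTransGen_assignStep_of_walks l fun q hq =>
    ⟨(hstart q hq).legal, ReflTransGen.mono (fun _ _ h => SubconfAdj.step h) _ _ (hL q hq)⟩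
  refine ⟨partitionOf l, ⟨?_, ?_⟩, ?_, _, _, hAS, hAT, ?_, ?_, hchain⟩
  · intro p hp
    obtain ⟨q, hq, rfl⟩ := List.mem_map.1 hp
    exact Multiset.card_pos.2 (hstart q hq).1
  · rw [← hES, ← hfst, Multiset.sum_coe, show (partitionOf l).map Prod.fst =
      (l.map Prod.fst).map Multiset.sum by simp [partitionOf]]
    exact (map_list_sum Multiset.sumAddMonoidHom _).symm
  · intro p hp
    obtain ⟨q, hq, rfl⟩ := List.mem_map.1 hp
    exact (hstart q hq).2.1
  · rw [← hES, ← hfst, Multiset.sum_coe]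
  · rw [← hZT, ← hsnd, Multiset.sum_coe]

lemma integralFlow_of_pConformReconf (h : PConformReconf β κ CS CT) :
    IntegralFlow β κ CS CT := by
  obtain ⟨P, hP, hβ, AS, AT, hAS, hAT, hSsum, hTsum, hchain⟩ := h
  obtain ⟨F, hF, hflow⟩ := Multiset.exists_flow_of_reflTransGen (r := AssignStep κ P)
    (fun A : List Config => (A : Multiset Config)) (fun _ _ h => h.exists_subconfAdj hP hβ) hchain
  exact ⟨AS, AT, F, fun _ hD => hAS.isSubconf hP hβ hD, fun _ hD => hAT.isSubconf hP hβ hD, hF,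
    hflow, by rw [Multiset.sum_coe, hSsum], by rw [Multiset.sum_coe, hTsum]⟩

end Flow

theorem stmt15_general (β κ : ℕ) (CS CT : Config)
    (hS : Legal κ CS) (hT : Legal κ CT)
    (hU : CS.sum = CT.sum) :
    PartitionILPFeasible β κ CS CT ↔ PConformReconf β κ CS CT :=
  ⟨fun h => pConformReconf_of_integralFlow (integralFlow_of_partitionILPFeasible hS hT hU h),
    fun h => partitionILPFeasible_of_integralFlow (integralFlow_of_pConformReconf h)⟩

theorem stmt15 (β κ : ℕ) (hβ : 0 < β) (hκ : 0 < κ) (CS CT : Config)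
    (hS : Legal κ CS) (hT : Legal κ CT)
    (hcard : Multiset.card CS = Multiset.card CT) (hU : CS.sum = CT.sum)
    (hpos : ∀ x ∈ CS.sum, 0 < x) :
    PartitionILPFeasible β κ CS CT ↔ PConformReconf β κ CS CT :=
  stmt15_general β κ CS CT hS hT hU
end
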